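/- arXiv:1711.04319 — 4 statements merged into one kernel-verified Lean document; each statement's English description precedes it below -/
import Mathlib

section
/- If L : L¹([0,1]) → BV([0,1]) is a continuous Markov operator (positive, preserving integrals of densities) such that for every bounded variation function g with ∫g dm = 0 one has ‖Lⁿg‖₁ → 0 as n → ∞, then there exist C ≥ 0 and λ < 0 such that for all g ∈ L¹([0,1]) with ∫g dm = 0 and all n, ‖Lⁿg‖₁ ≤ C e^{λn} ‖g‖₁. -/
/-!
A positive, mass-preserving operator is an `L¹` contraction. Regularization maps the zero-mean
unit ball into a bounded subset of `BV`, which is totally bounded in `L¹` (Helly): a function of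
variation `V` is within `V / n` of its step function on the grid of mesh `1 / n`. Since the
iterates are contractions, the pointwise decay granted by mixing is uniform on a totally bounded
set, so some power `L ^ m` halves the norm of every zero-mean density; iterating gives the
exponential rate.
-/

open MeasureTheory Set Filter
open scoped ENNReal NNReal

noncomputable section

/-- Lebesgue measure restricted to the unit interval `[0,1]`. -/
abbrev μI : MeasureTheory.Measure ℝ := MeasureTheory.volume.restrict (Set.Icc (0:ℝ) 1)

/-- The variation of an `L¹([0,1])` element: the infimum of the variations of its
representatives (finite iff the element has a bounded variation representative). -/
def var (f : MeasureTheory.Lp ℝ 1 μI) : ℝ≥0∞ :=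
  ⨅ (h : ℝ → ℝ) (_ : ∀ᵐ x ∂μI, (f : ℝ → ℝ) x = h x), eVariationOn h (Set.Icc (0:ℝ) 1)

open Topology

lemma le_two_mul_exp_of_antitone_of_le_half {a : ℕ → ℝ} (ha : Antitone a) (ha0 : 0 ≤ a 0)
    {m : ℕ} (hm : 0 < m) (hhalf : ∀ n, a (n + m) ≤ a n / 2) (n : ℕ) :
    a n ≤ 2 * Real.exp (-Real.log 2 / m * n) * a 0 := by
  have hblock : ∀ k, a (m * k) ≤ a 0 / 2 ^ k := by
    intro k
    induction k with
    | zero => simp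
    | succ k ih =>
      calc a (m * (k + 1)) = a (m * k + m) := by rw [mul_add_one]
        _ ≤ a (m * k) / 2 := hhalf _
        _ ≤ a 0 / 2 ^ k / 2 := by gcongr
        _ = a 0 / 2 ^ (k + 1) := by ring
  set k := n / m
  have hnk : (n : ℝ) / m ≤ k + 1 := by
    rw [div_le_iff₀ (by exact_mod_cast hm)]
    exact_mod_cast (Nat.lt_mul_div_succ n hm).le.trans_eq (mul_comm _ _)
  have hexp : (2 ^ (k + 1))⁻¹ ≤ Real.exp (-Real.log 2 / m * n) := by
    rw [← Real.exp_log (by positivity : (0:ℝ) < (2 ^ (k + 1))⁻¹), Real.log_inv, Real.log_pow,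
      Real.exp_le_exp]
    have := mul_le_mul_of_nonneg_left hnk (Real.log_nonneg one_le_two)
    calc -(((k + 1 : ℕ) : ℝ) * Real.log 2) = -(Real.log 2 * (k + 1)) := by push_cast; ring
      _ ≤ -(Real.log 2 * (n / m)) := neg_le_neg this
      _ = -Real.log 2 / m * n := by ring
  calc a n ≤ a (m * k) := ha (Nat.mul_div_le n m)
    _ ≤ a 0 / 2 ^ k := hblock k
    _ = 2 * (2 ^ (k + 1))⁻¹ * a 0 := by field_simp; ring
    _ ≤ 2 * Real.exp (-Real.log 2 / m * n) * a 0 := by gcongr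

section Contraction

variable {R E : Type*} [Semiring R] [SeminormedAddCommGroup E] [Module R E] {T : E →L[R] E}

lemma norm_pow_apply_le (hT : ∀ x, ‖T x‖ ≤ ‖x‖) (n : ℕ) (x : E) : ‖(T ^ n) x‖ ≤ ‖x‖ := by
  induction n with
  | zero => simp
  | succ n ih => rw [pow_succ', mul_apply_eq_comp]; exact (hT _).trans ih

lemma TotallyBounded.exists_forall_norm_pow_apply_lt (hT : ∀ x, ‖T x‖ ≤ ‖x‖) {S : Set E}
    (hS : TotallyBounded S) (hmix : ∀ s ∈ S, Tendsto (fun n ↦ ‖(T ^ n) s‖) atTop (𝓝 0))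
    {ε : ℝ} (hε : 0 < ε) : ∃ N, ∀ s ∈ S, ‖(T ^ N) s‖ < ε := by
  obtain ⟨t, htS, htfin, hcover⟩ :=
    Metric.finite_approx_of_totallyBounded hS (ε / 2) (half_pos hε)
  have hnet : ∀ᶠ n in atTop, ∀ y ∈ t, ‖(T ^ n) y‖ < ε / 2 :=
    (eventually_all_finite htfin).2 fun y hy ↦
      (hmix y (htS hy)).eventually (gt_mem_nhds (half_pos hε))
  obtain ⟨N, hN⟩ := hnet.exists
  refine ⟨N, fun s hs ↦ ?_⟩
  obtain ⟨y, hy, hsy⟩ := mem_iUnion₂.1 (hcover hs)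
  calc ‖(T ^ N) s‖ = ‖(T ^ N) y + (T ^ N) (s - y)‖ := by rw [← map_add, add_sub_cancel]
    _ ≤ ‖(T ^ N) y‖ + ‖s - y‖ :=
      (norm_add_le _ _).trans (by gcongr; exact norm_pow_apply_le hT N _)
    _ < ε / 2 + ε / 2 := add_lt_add (hN y hy) (mem_ball_iff_norm.1 hsy)
    _ = ε := add_halves ε

end Contraction

section ExponentialDecay

variable {E : Type*} [NormedAddCommGroup E] [NormedSpace ℝ E] {T : E →L[ℝ] E}

lemma exists_norm_pow_apply_le_half (hT : ∀ x, ‖T x‖ ≤ ‖x‖) (V : Submodule ℝ E) {S : Set E}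
    (hS : TotallyBounded S) (hmix : ∀ s ∈ S, Tendsto (fun n ↦ ‖(T ^ n) s‖) atTop (𝓝 0))
    (hVS : ∀ x ∈ V, ‖x‖ ≤ 1 → T x ∈ S) :
    ∃ m, 0 < m ∧ ∀ x ∈ V, ‖(T ^ m) x‖ ≤ ‖x‖ / 2 := by
  obtain ⟨N, hN⟩ := hS.exists_forall_norm_pow_apply_lt hT hmix (half_pos one_pos)
  refine ⟨N + 1, N.succ_pos, fun x hx ↦ ?_⟩
  rcases eq_or_ne x 0 with rfl | hx0
  · simp
  have hpos : 0 < ‖x‖ := norm_pos_iff.2 hx0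
  have hunit : ‖‖x‖⁻¹ • x‖ ≤ 1 := by
    rw [norm_smul, norm_inv, norm_norm, inv_mul_cancel₀ hpos.ne']
  have := hN _ (hVS _ (V.smul_mem _ hx) hunit)
  rw [← mul_apply_eq_comp, ← pow_succ, map_smul, norm_smul, norm_inv, norm_norm,
    inv_mul_lt_iff₀ hpos] at this
  linarith

theorem exists_norm_pow_apply_le_exp (hT : ∀ x, ‖T x‖ ≤ ‖x‖) (V : Submodule ℝ E)
    (hV : ∀ x ∈ V, T x ∈ V) {S : Set E} (hS : TotallyBounded S)
    (hmix : ∀ s ∈ S, Tendsto (fun n ↦ ‖(T ^ n) s‖) atTop (𝓝 0))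
    (hVS : ∀ x ∈ V, ‖x‖ ≤ 1 → T x ∈ S) :
    ∃ C lam : ℝ, 0 ≤ C ∧ lam < 0 ∧
      ∀ x ∈ V, ∀ n : ℕ, ‖(T ^ n) x‖ ≤ C * Real.exp (lam * n) * ‖x‖ := by
  obtain ⟨m, hm, hhalf⟩ := exists_norm_pow_apply_le_half hT V hS hmix hVS
  refine ⟨2, -Real.log 2 / m, zero_le_two,
    div_neg_of_neg_of_pos (neg_neg_of_pos (Real.log_pos one_lt_two)) (by exact_mod_cast hm),
    fun x hx n ↦ ?_⟩
  have hVpow : ∀ k, (T ^ k) x ∈ V := by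
    intro k
    induction k with
    | zero => simpa
    | succ k ih => rw [pow_succ', mul_apply_eq_comp]; exact hV _ ih
  have hanti : Antitone fun k ↦ ‖(T ^ k) x‖ := antitone_nat_of_succ_le fun k ↦ by
    rw [pow_succ', mul_apply_eq_comp]; exact hT _
  simpa using le_two_mul_exp_of_antitone_of_le_half hanti (norm_nonneg _) hm
    (fun k ↦ by rw [add_comm, pow_add, mul_apply_eq_comp]; exact hhalf _ (hVpow k)) n

end ExponentialDecay

section Markov

variable {α : Type*} [MeasurableSpace α] {μ : Measure α}

lemma MeasureTheory.L1.norm_eq_integral_of_nonneg {g : Lp ℝ 1 μ} (hg : 0 ≤ g) :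
    ‖g‖ = ∫ x, g x ∂μ := by
  rw [L1.norm_eq_integral_norm]
  refine integral_congr_ae ?_
  filter_upwards [(Lp.coeFn_nonneg g).2 hg] with x hx
  exact Real.norm_of_nonneg hx

lemma norm_map_le_of_nonneg_of_integral_eq {L : Lp ℝ 1 μ →L[ℝ] Lp ℝ 1 μ}
    (hpos : ∀ f, 0 ≤ f → 0 ≤ L f) (hmass : ∀ f, ∫ x, L f x ∂μ = ∫ x, f x ∂μ) (f : Lp ℝ 1 μ) :
    ‖L f‖ ≤ ‖f‖ := by
  have hmono : Monotone L := fun f g hfg ↦ by simpa using hpos (g - f) (sub_nonneg.2 hfg)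
  have hLabs : 0 ≤ L (|f|) := hpos _ (abs_nonneg f)
  have habs : |L f| ≤ |L (|f|)| := by
    rw [abs_of_nonneg hLabs]
    exact sup_le (hmono (le_abs_self f)) (by simpa using hmono (neg_le_abs f))
  calc ‖L f‖ ≤ ‖L (|f|)‖ := norm_le_norm_of_abs_le_abs habs
    _ = ‖|f|‖ := by
      rw [L1.norm_eq_integral_of_nonneg hLabs, hmass,
        L1.norm_eq_integral_of_nonneg (abs_nonneg f)]
    _ = ‖f‖ := norm_abs_eq_norm f

end Markov

lemma eVariationOn.sum_range_Icc {α E : Type*} [LinearOrder α] [PseudoEMetricSpace E]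
    (f : α → E) {a : ℕ → α} (ha : Monotone a) (n : ℕ) :
    ∑ k ∈ Finset.range n, eVariationOn f (Icc (a k) (a (k + 1))) =
      eVariationOn f (Icc (a 0) (a n)) := by
  induction n with
  | zero => simp
  | succ n ih =>
    rw [Finset.sum_range_succ, ih]
    simpa using eVariationOn.Icc_add_Icc f (ha (Nat.zero_le n)) (ha n.le_succ) (mem_univ _)

lemma totallyBounded_of_forall_subset_thickening {X : Type*} [PseudoMetricSpace X] {s : Set X}
    (h : ∀ ε > 0, ∃ t, TotallyBounded t ∧ s ⊆ Metric.thickening ε t) : TotallyBounded s := by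
  refine Metric.totallyBounded_iff.2 fun ε hε ↦ ?_
  obtain ⟨t, ht, hst⟩ := h (ε / 2) (half_pos hε)
  obtain ⟨u, hu, htu⟩ := Metric.totallyBounded_iff.1 ht (ε / 2) (half_pos hε)
  refine ⟨u, hu, fun x hx ↦ ?_⟩
  obtain ⟨z, hz, hxz⟩ := Metric.mem_thickening_iff.1 (hst hx)
  obtain ⟨y, hy, hzy⟩ := mem_iUnion₂.1 (htu hz)
  exact mem_iUnion₂.2 ⟨y, hy, Metric.mem_ball.2 <| by
    linarith [dist_triangle x z y, Metric.mem_ball.1 hzy]⟩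

instance : IsProbabilityMeasure μI := ⟨by simp⟩

lemma exists_ae_eq_eVariationOn_lt {h : Lp ℝ 1 μI} {r : ℝ≥0∞} (hr : var h < r) :
    ∃ h₀ : ℝ → ℝ, h =ᵐ[μI] h₀ ∧ eVariationOn h₀ (Icc 0 1) < r := by
  simpa only [var, iInf_lt_iff, exists_prop, Filter.EventuallyEq] using hr

lemma abs_le_norm_add_eVariationOn {h : Lp ℝ 1 μI} {h₀ : ℝ → ℝ} (hh₀ : h =ᵐ[μI] h₀)
    (hV : eVariationOn h₀ (Icc 0 1) ≠ ⊤) {z : ℝ} (hz : z ∈ Icc (0:ℝ) 1) :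
    |h₀ z| ≤ ‖h‖ + (eVariationOn h₀ (Icc 0 1)).toReal := by
  have hnorm : ‖h‖ = ∫ x, |h₀ x| ∂μI := by
    rw [L1.norm_eq_integral_norm]
    exact integral_congr_ae (hh₀.mono fun x hx ↦ by simp [hx])
  have hint : Integrable (fun x ↦ |h₀ x|) μI :=
    (L1.integrable_coeFn h).norm.congr (hh₀.mono fun x hx ↦ by simp [hx])
  obtain ⟨y, hy, hyle⟩ :=
    exists_notMem_null_le_integral hint (N := (Icc (0:ℝ) 1)ᶜ) (by simp)
  have hdist := BoundedVariationOn.dist_le hV hz (not_not.1 hy)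
  rw [Real.dist_eq] at hdist
  linarith [abs_sub_abs_le_abs_sub (h₀ z) (h₀ y)]

/-- `Fin.ofNat` reduces `⌊n x⌋₊` modulo `n + 1`, which only matters for `x ≥ 1 + 1 / n`. -/
def gridStep (n : ℕ) (v : Fin (n + 1) → ℝ) (x : ℝ) : ℝ := v (Fin.ofNat (n + 1) ⌊x * n⌋₊)

def sample (n : ℕ) (f : ℝ → ℝ) (i : Fin (n + 1)) : ℝ := f ((i : ℕ) / n)

lemma memLp_gridStep (n : ℕ) (v : Fin (n + 1) → ℝ) : MemLp (gridStep n v) 1 μI := by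
  refine MemLp.of_bound ?_ ‖v‖ (ae_of_all _ fun x ↦ norm_le_pi_norm v _)
  exact ((measurable_of_finite v).comp ((measurable_from_nat (f := Fin.ofNat (n + 1))).comp
    (Nat.measurable_floor.comp (measurable_mul_const (n : ℝ))))).aestronglyMeasurable

def stepLp (n : ℕ) (v : Fin (n + 1) → ℝ) : Lp ℝ 1 μI := (memLp_gridStep n v).toLp

lemma coeFn_stepLp (n : ℕ) (v : Fin (n + 1) → ℝ) : stepLp n v =ᵐ[μI] gridStep n v :=
  MemLp.coeFn_toLp _

lemma lipschitzWith_stepLp (n : ℕ) : LipschitzWith 1 (stepLp n) := by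
  refine LipschitzWith.of_dist_le_mul fun v w ↦ ?_
  rw [dist_eq_norm, stepLp, stepLp, ← MemLp.toLp_sub, NNReal.coe_one, one_mul, dist_eq_norm]
  refine (Lp.norm_le_of_ae_bound (C := ‖v - w‖) (norm_nonneg _) ?_).trans_eq
    (by simp [measureUnivNNReal])
  filter_upwards [MemLp.coeFn_toLp ((memLp_gridStep n v).sub (memLp_gridStep n w))] with x hx
  rw [hx]
  exact norm_le_pi_norm (v - w) _

lemma gridStep_sample {n : ℕ} (f : ℝ → ℝ) {x : ℝ} (hx : x ∈ Icc (0:ℝ) 1) :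
    gridStep n (sample n f) x = f (⌊x * n⌋₊ / n) := by
  have : ⌊x * n⌋₊ < n + 1 :=
    Nat.lt_succ_of_le (Nat.floor_le_of_le (by nlinarith [hx.1, hx.2, (n.cast_nonneg : (0:ℝ) ≤ n)]))
  simp [gridStep, sample, Nat.mod_eq_of_lt this]

lemma natFloor_mul_div_mem_Icc {n k : ℕ} (hn : 0 < n) {x : ℝ}
    (hx : x ∈ Icc ((k : ℝ) / n) ((k + 1 : ℕ) / n)) :
    (⌊x * n⌋₊ : ℝ) / n ∈ Icc ((k : ℝ) / n) ((k + 1 : ℕ) / n) := by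
  have hn' : (0 : ℝ) < n := by exact_mod_cast hn
  obtain ⟨hkx, hxk⟩ := hx
  rw [div_le_iff₀ hn'] at hkx
  rw [le_div_iff₀ hn'] at hxk
  refine ⟨?_, ?_⟩ <;> gcongr
  · exact_mod_cast Nat.le_floor hkx
  · exact Nat.floor_le_of_le hxk

lemma integral_abs_sub_gridStep_le (f : ℝ → ℝ) {n k : ℕ} (hk : k < n)
    (hV : eVariationOn f (Icc ((k : ℝ) / n) ((k + 1 : ℕ) / n)) ≠ ⊤) :
    ∫ x in (k : ℝ) / n..((k + 1 : ℕ) : ℝ) / n, |f x - gridStep n (sample n f) x|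
      ≤ (eVariationOn f (Icc ((k : ℝ) / n) ((k + 1 : ℕ) / n))).toReal / n := by
  set I := Icc ((k : ℝ) / n) ((k + 1 : ℕ) / n)
  have hn : 0 < n := (Nat.zero_le k).trans_lt hk
  have hle : (k : ℝ) / n ≤ ((k + 1 : ℕ) : ℝ) / n := by gcongr; exact_mod_cast k.le_succ
  have hbound : ∀ x ∈ uIoc ((k : ℝ) / n) ((k + 1 : ℕ) / n),
      ‖|f x - gridStep n (sample n f) x|‖ ≤ (eVariationOn f I).toReal := fun x hx ↦ by
    have hxI : x ∈ I := Ioc_subset_Icc_self (uIoc_of_le hle ▸ hx)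
    have hx01 : x ∈ Icc (0:ℝ) 1 := Icc_subset_Icc (by positivity)
      ((div_le_one (by exact_mod_cast hn)).2 (by exact_mod_cast hk)) hxI
    rw [Real.norm_eq_abs, abs_abs, gridStep_sample f hx01, ← Real.dist_eq]
    exact BoundedVariationOn.dist_le hV hxI (natFloor_mul_div_mem_Icc hn hxI)
  calc _ ≤ ‖∫ x in (k : ℝ) / n..((k + 1 : ℕ) : ℝ) / n, |f x - gridStep n (sample n f) x|‖ :=
        Real.le_norm_self _
    _ ≤ (eVariationOn f I).toReal * |((k + 1 : ℕ) : ℝ) / n - k / n| :=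
        intervalIntegral.norm_integral_le_of_norm_le_const hbound
    _ = (eVariationOn f I).toReal / n := by
        rw [abs_of_nonneg (sub_nonneg.2 hle), ← sub_div, Nat.cast_succ, add_sub_cancel_left,
          mul_one_div]

lemma dist_stepLp_sample_le {h : Lp ℝ 1 μI} {f : ℝ → ℝ} (hf : h =ᵐ[μI] f)
    (hV : eVariationOn f (Icc 0 1) ≠ ⊤) {n : ℕ} (hn : 0 < n) :
    dist h (stepLp n (sample n f)) ≤ (eVariationOn f (Icc 0 1)).toReal / n := by
  set g : ℝ → ℝ := fun x ↦ |f x - gridStep n (sample n f) x|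
  set a : ℕ → ℝ := fun k ↦ k / n
  have ha : Monotone a := fun i j hij ↦ by simp only [a]; gcongr
  have ha0 : a 0 = 0 := by simp [a]
  have han : a n = 1 := div_self (by positivity)
  have hsub : ∀ k < n, Icc (a k) (a (k + 1)) ⊆ Icc 0 1 := fun k hk ↦
    Icc_subset_Icc (ha0 ▸ ha (Nat.zero_le k)) (han ▸ ha hk)
  have hdiff : ∀ᵐ x ∂μI, ‖(h - stepLp n (sample n f)) x‖ = g x := by
    filter_upwards [Lp.coeFn_sub h (stepLp n (sample n f)), hf,
      coeFn_stepLp n (sample n f)] with x h1 h2 h3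
    rw [h1, Pi.sub_apply, h2, h3, Real.norm_eq_abs]
  have hg : IntegrableOn g (Icc 0 1) := (L1.integrable_coeFn _).norm.congr hdiff
  have hVk : ∀ k < n, eVariationOn f (Icc (a k) (a (k + 1))) ≠ ⊤ := fun k hk ↦
    ne_top_of_le_ne_top hV (eVariationOn.mono f (hsub k hk))
  calc dist h (stepLp n (sample n f)) = ∫ x in a 0..a n, g x := by
        rw [dist_eq_norm, L1.norm_eq_integral_norm, integral_congr_ae hdiff, ha0, han,
          intervalIntegral.integral_of_le zero_le_one, integral_Icc_eq_integral_Ioc]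
    _ = ∑ k ∈ Finset.range n, ∫ x in a k..a (k + 1), g x :=
        (intervalIntegral.sum_integral_adjacent_intervals fun k hk ↦ (hg.mono_set
          ((uIcc_of_le (ha k.le_succ)).trans_subset (hsub k hk))).intervalIntegrable).symm
    _ ≤ ∑ k ∈ Finset.range n, (eVariationOn f (Icc (a k) (a (k + 1)))).toReal / n :=
        Finset.sum_le_sum fun k hk ↦ integral_abs_sub_gridStep_le f (Finset.mem_range.1 hk)
          (hVk k (Finset.mem_range.1 hk))
    _ = (eVariationOn f (Icc 0 1)).toReal / n := by
        rw [← Finset.sum_div, ← ENNReal.toReal_sum fun k hk ↦ hVk k (Finset.mem_range.1 hk),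
          eVariationOn.sum_range_Icc f ha, ha0, han]

theorem totallyBounded_setOf_norm_le_var_le (c : ℝ) :
    TotallyBounded {h : Lp ℝ 1 μI | ‖h‖ ≤ c ∧ var h ≤ ENNReal.ofReal c} := by
  refine totallyBounded_of_forall_subset_thickening fun ε hε ↦ ?_
  obtain ⟨n, hn⟩ := exists_nat_gt ((c + 1) / ε)
  have hnε : (c + 1) / (n + 1 : ℕ) < ε := by
    rw [div_lt_iff₀ (by positivity)]
    rw [div_lt_iff₀ hε] at hn
    push_cast
    nlinarith
  refine ⟨stepLp (n + 1) '' Metric.closedBall 0 (2 * c + 1),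
    ((isCompact_closedBall _ _).image (lipschitzWith_stepLp _).continuous).totallyBounded,
    fun h ⟨hnorm, hvar⟩ ↦ ?_⟩
  have hc : 0 ≤ c := (norm_nonneg h).trans hnorm
  obtain ⟨h₀, hh₀, hlt⟩ := exists_ae_eq_eVariationOn_lt (r := ENNReal.ofReal (c + 1))
    (hvar.trans_lt (ENNReal.ofReal_lt_ofReal_iff'.2 ⟨by linarith, by linarith⟩))
  have hV : eVariationOn h₀ (Icc 0 1) ≠ ⊤ := ne_top_of_lt hlt
  have hVc : (eVariationOn h₀ (Icc 0 1)).toReal ≤ c + 1 :=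
    ENNReal.toReal_le_of_le_ofReal (by linarith) hlt.le
  refine Metric.mem_thickening_iff.2
    ⟨stepLp (n + 1) (sample (n + 1) h₀), mem_image_of_mem _ ?_, ?_⟩
  · rw [mem_closedBall_zero_iff, pi_norm_le_iff_of_nonneg (by linarith)]
    intro i
    have := abs_le_norm_add_eVariationOn hh₀ hV (z := (i : ℕ) / (n + 1 : ℕ))
      (unitInterval.div_mem (Nat.cast_nonneg _) (Nat.cast_nonneg _) (by exact_mod_cast i.is_le))
    rw [Real.norm_eq_abs, sample]
    linarith
  · calc dist h (stepLp (n + 1) (sample (n + 1) h₀))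
        ≤ (eVariationOn h₀ (Icc 0 1)).toReal / (n + 1 : ℕ) :=
          dist_stepLp_sample_le hh₀ hV n.succ_pos
      _ ≤ (c + 1) / (n + 1 : ℕ) := by gcongr
      _ < ε := hnε

/-- mixing together with regularization `L¹ → BV` implies exponential
contraction of the zero-average space in `L¹`. -/
theorem mixing_and_regularization_imply_exponential_contraction
    (L : MeasureTheory.Lp ℝ 1 μI →L[ℝ] MeasureTheory.Lp ℝ 1 μI)
    -- Markov: positivity
    (hpos : ∀ f : MeasureTheory.Lp ℝ 1 μI, (∀ᵐ x ∂μI, 0 ≤ (f : ℝ → ℝ) x) →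
      ∀ᵐ x ∂μI, 0 ≤ (L f : ℝ → ℝ) x)
    -- Markov: preservation of integrals
    (hmass : ∀ f : MeasureTheory.Lp ℝ 1 μI,
      (∫ x, (L f : ℝ → ℝ) x ∂μI) = ∫ x, (f : ℝ → ℝ) x ∂μI)
    -- continuity (regularization) L¹ → BV
    (hreg : ∃ K : ℝ, ∀ f : MeasureTheory.Lp ℝ 1 μI,
      var (L f) ≠ ⊤ ∧ ‖L f‖ + (var (L f)).toReal ≤ K * ‖f‖)
    -- mixing: for zero-average BV elements the iterates tend to 0 in L¹
    (hmix : ∀ g : MeasureTheory.Lp ℝ 1 μI, var g ≠ ⊤ →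
      (∫ x, (g : ℝ → ℝ) x ∂μI) = 0 →
      Filter.Tendsto (fun n : ℕ => ‖(L ^ n) g‖) Filter.atTop (nhds 0)) :
    ∃ C lam : ℝ, 0 ≤ C ∧ lam < 0 ∧
      ∀ g : MeasureTheory.Lp ℝ 1 μI, (∫ x, (g : ℝ → ℝ) x ∂μI) = 0 →
        ∀ n : ℕ, ‖(L ^ n) g‖ ≤ C * Real.exp (lam * n) * ‖g‖ := by
  obtain ⟨K, hK⟩ := hreg
  set V : Submodule ℝ (Lp ℝ 1 μI) := LinearMap.ker (L1.integralCLM : Lp ℝ 1 μI →L[ℝ] ℝ).toLinearMap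
  have hV : ∀ g, g ∈ V ↔ ∫ x, g x ∂μI = 0 := fun g ↦ by
    rw [LinearMap.mem_ker, ← L1.integral_eq_integral, L1.integral_eq]
    rfl
  have hLV : ∀ g ∈ V, L g ∈ V := fun g hg ↦ (hV _).2 ((hmass g).trans ((hV g).1 hg))
  have hLS : ∀ g ∈ V, ‖g‖ ≤ 1 →
      L g ∈ {h | ‖h‖ ≤ max K 0 ∧ var h ≤ ENNReal.ofReal (max K 0)} ∩ V := by
    intro g hg hg1
    obtain ⟨hfin, hbound⟩ := hK g
    have hKg : K * ‖g‖ ≤ max K 0 :=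
      (mul_le_mul_of_nonneg_right (le_max_left K 0) (norm_nonneg g)).trans
        (mul_le_of_le_one_right (le_max_right K 0) hg1)
    refine ⟨⟨by linarith [ENNReal.toReal_nonneg (a := var (L g))], ?_⟩, hLV g hg⟩
    rw [← ENNReal.ofReal_toReal hfin]
    exact ENNReal.ofReal_le_ofReal (by linarith [norm_nonneg (L g)])
  obtain ⟨C, lam, hC, hlam, hdecay⟩ := exists_norm_pow_apply_le_exp
    (norm_map_le_of_nonneg_of_integral_eq
      (fun f hf ↦ (Lp.coeFn_nonneg _).1 (hpos f ((Lp.coeFn_nonneg f).2 hf))) hmass)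
    V hLV ((totallyBounded_setOf_norm_le_var_le _).subset inter_subset_left)
    (fun s hs ↦ hmix s (ne_top_of_le_ne_top ENNReal.ofReal_ne_top hs.1.2) ((hV s).1 hs.2)) hLS
  exact ⟨C, lam, hC, hlam, fun g hg ↦ hdecay g ((hV g).2 hg)⟩
end
end

section
/- Let L₀ be a Markov operator on measures on [0,1] such that: (i) for each zero-average g ∈ BV, ‖L₀ⁿ g‖₁ → 0; (ii) L₀ : L¹ → BV is continuous. Then L₀ has a unique fixed probability measure f₀ ∈ BV. -/
open MeasureTheory Set Filter
open scoped ENNReal NNReal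

noncomputable section

/-- The unit interval `[0,1]`. -/
abbrev II : Set ℝ := Set.Icc (0:ℝ) 1

/-- Lebesgue measure restricted to `[0,1]`. -/
abbrev volI : MeasureTheory.Measure ℝ := MeasureTheory.volume.restrict II

/-- The reflecting boundary map `π(x) = min_{i ∈ ℤ} |x - 2i|`. -/
def reflMap (x : ℝ) : ℝ := ⨅ i : ℤ, |x - 2 * (i : ℝ)|

/-- The Wasserstein–Kantorovich norm `‖μ‖_W = sup {∫ g dμ : ‖g‖_∞ ≤ 1, Lip(g) ≤ 1}`. -/
def Wnorm (m : MeasureTheory.SignedMeasure ℝ) : ℝ :=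
  ⨆ g : {g : ℝ → ℝ // (∀ x, |g x| ≤ 1) ∧ LipschitzWith 1 g},
    (∫ x, g.1 x ∂m.toJordanDecomposition.posPart -
     ∫ x, g.1 x ∂m.toJordanDecomposition.negPart)

/-- The total variation (`L¹`) norm of a signed measure. -/
def tvNorm (m : MeasureTheory.SignedMeasure ℝ) : ℝ :=
  (m.totalVariation Set.univ).toReal

/-- The bounded variation norm `‖g‖_BV = ‖g‖₁ + Var_{[0,1]}(g)` of a function on `[0,1]`. -/
def bvNorm (g : ℝ → ℝ) : ℝ :=
  (∫ x in II, |g x|) + (eVariationOn g II).toReal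

/-- `m` is the absolutely continuous measure with density `h`, supported in `[0,1]`. -/
def IsL1Density (m : MeasureTheory.SignedMeasure ℝ) (h : ℝ → ℝ) : Prop :=
  MeasureTheory.Integrable h MeasureTheory.volume ∧ (∀ x, x ∉ II → h x = 0) ∧
    m = MeasureTheory.volume.withDensityᵥ h

/-- `m` has a bounded variation density `h` on `[0,1]`. -/
def IsBVDensity (m : MeasureTheory.SignedMeasure ℝ) (h : ℝ → ℝ) : Prop :=
  IsL1Density m h ∧ eVariationOn h II ≠ ⊤

/-- The signed measure with (zero-extended) density `f` w.r.t. Lebesgue measure. -/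
def densSM (f : ℝ → ℝ) : MeasureTheory.SignedMeasure ℝ :=
  MeasureTheory.volume.withDensityᵥ f

/-- Convolution of two (positive) measures on `ℝ`. -/
def posConv (a b : MeasureTheory.Measure ℝ) : MeasureTheory.Measure ℝ :=
  (a.prod b).map (fun p => p.1 + p.2)

instance (a b : MeasureTheory.Measure ℝ) [MeasureTheory.IsFiniteMeasure a]
    [MeasureTheory.IsFiniteMeasure b] : MeasureTheory.IsFiniteMeasure (posConv a b) := by
  unfold posConv; infer_instance

/-- Convolution of two finite signed measures, via Jordan decomposition. -/
def mConv (a b : MeasureTheory.SignedMeasure ℝ) : MeasureTheory.SignedMeasure ℝ :=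
  (posConv a.toJordanDecomposition.posPart b.toJordanDecomposition.posPart +
    posConv a.toJordanDecomposition.negPart b.toJordanDecomposition.negPart).toSignedMeasure -
  (posConv a.toJordanDecomposition.posPart b.toJordanDecomposition.negPart +
    posConv a.toJordanDecomposition.negPart b.toJordanDecomposition.posPart).toSignedMeasure

/-- The reflecting-boundary convolution `a ∗̂ b = π_*(a ∗ b)`. -/
def reflConvM (a b : MeasureTheory.SignedMeasure ℝ) : MeasureTheory.SignedMeasure ℝ :=
  (mConv a b).map reflMap

/-- The annealed transfer operator of the system with additive noise:
`L_{ρ,T} m = ρ ∗̂ (L_T m)` where `L_T` is the pushforward by `T`. -/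
def annealedM (ρ : ℝ → ℝ) (T : ℝ → ℝ) (m : MeasureTheory.SignedMeasure ℝ) :
    MeasureTheory.SignedMeasure ℝ :=
  reflConvM (densSM ρ) (m.map T)

/-- `T` is a nonsingular Borel self-map of `[0,1]`. -/
def Nonsingular (T : ℝ → ℝ) : Prop :=
  Measurable T ∧ Set.MapsTo T II II ∧
    ∀ A : Set ℝ, MeasurableSet A → MeasureTheory.volume A = 0 → volI (T ⁻¹' A) = 0

/-- A Markov operator: positive and total-mass preserving. -/
def IsMarkov (L : MeasureTheory.SignedMeasure ℝ → MeasureTheory.SignedMeasure ℝ) : Prop :=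
  (∀ m : MeasureTheory.SignedMeasure ℝ, (∀ A : Set ℝ, 0 ≤ m A) → ∀ A : Set ℝ, 0 ≤ L m A) ∧
  (∀ m : MeasureTheory.SignedMeasure ℝ, L m Set.univ = m Set.univ)

/-- A BV noise kernel which is a probability density on `[0,1]`. -/
def IsBVKernel (ρ : ℝ → ℝ) : Prop :=
  MeasureTheory.Integrable ρ MeasureTheory.volume ∧ (∀ x, x ∉ II → ρ x = 0) ∧
    (∀ x, 0 ≤ ρ x) ∧ (∫ x, ρ x) = 1 ∧ eVariationOn ρ II ≠ ⊤

/-!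
Iterate Lebesgue measure `m` on `[0,1]`. Regularization bounds the BV norms of the densities
of all `Lⁿ⁺¹ m` by one constant, so by Helly's selection theorem a subsequence converges in total
variation to a probability measure `ν` with an `L¹` density. Mixing applied to the zero-mass BV
measure `L m - m` gives `‖Lⁿ⁺¹ m - Lⁿ m‖ → 0`, and as `L` contracts the total variation, `ν` is
fixed; regularization then gives `ν = L ν` a BV density. Two fixed probability measures in BV
differ by a zero-mass fixed point, which mixing forces to vanish.
-/

open Topology

lemma MeasureTheory.Measure.toSignedMeasure_apply_nonneg {α : Type*} [MeasurableSpace α]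
    (μ : Measure α) [IsFiniteMeasure μ] (A : Set α) : 0 ≤ μ.toSignedMeasure A := by
  by_cases hA : MeasurableSet A
  · rw [Measure.toSignedMeasure_apply_measurable hA]; exact ENNReal.toReal_nonneg
  · rw [VectorMeasure.not_measurable _ hA]

lemma withDensityᵥ_apply_nonneg {α : Type*} [MeasurableSpace α] {μ : Measure α} {g : α → ℝ}
    (hg : Integrable g μ) (hg0 : 0 ≤ g) (A : Set α) : 0 ≤ μ.withDensityᵥ g A := by
  by_cases hA : MeasurableSet A
  · rw [withDensityᵥ_apply hg hA]; exact setIntegral_nonneg hA fun x _ => hg0 x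
  · rw [VectorMeasure.not_measurable _ hA]

lemma MeasureTheory.SignedMeasure.apply_eq_toReal_sub {α : Type*} [MeasurableSpace α]
    (s : SignedMeasure α) {B : Set α} (hB : MeasurableSet B) :
    s B = (s.toJordanDecomposition.posPart B).toReal -
      (s.toJordanDecomposition.negPart B).toReal := by
  conv_lhs => rw [← s.toSignedMeasure_toJordanDecomposition]
  exact Measure.toSignedMeasure_sub_apply hB

section TotalVariation

variable (s : SignedMeasure ℝ)

lemma tvNorm_eq_toReal_add : tvNorm s =
    (s.toJordanDecomposition.posPart univ).toReal + (s.toJordanDecomposition.negPart univ).toReal :=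
  ENNReal.toReal_add (measure_ne_top _ _) (measure_ne_top _ _)

lemma sub_apply_compl_le_tvNorm {B : Set ℝ} (hB : MeasurableSet B) : s B - s Bᶜ ≤ tvNorm s := by
  rw [s.apply_eq_toReal_sub hB, s.apply_eq_toReal_sub hB.compl, tvNorm_eq_toReal_add]
  have hP := measureReal_mono (μ := s.toJordanDecomposition.posPart) (subset_univ B)
  have hN := measureReal_mono (μ := s.toJordanDecomposition.negPart) (subset_univ Bᶜ)
  simp only [measureReal_def] at hP hN
  linarith [(s.toJordanDecomposition.negPart B).toReal_nonneg,
    (s.toJordanDecomposition.posPart Bᶜ).toReal_nonneg]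

lemma abs_apply_le_tvNorm (A : Set ℝ) : |s A| ≤ tvNorm s := by
  by_cases hA : MeasurableSet A
  · rw [s.apply_eq_toReal_sub hA, tvNorm_eq_toReal_add]
    have hP := measureReal_mono (μ := s.toJordanDecomposition.posPart) (subset_univ A)
    have hN := measureReal_mono (μ := s.toJordanDecomposition.negPart) (subset_univ A)
    simp only [measureReal_def] at hP hN
    rw [abs_le]
    constructor <;> linarith [(s.toJordanDecomposition.negPart A).toReal_nonneg,
      (s.toJordanDecomposition.posPart A).toReal_nonneg]
  · rw [VectorMeasure.not_measurable _ hA, abs_zero]; exact ENNReal.toReal_nonneg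

/-- The Hahn decomposition realises the total variation. -/
lemma exists_tvNorm_eq : ∃ B : Set ℝ, MeasurableSet B ∧ tvNorm s = s B - s Bᶜ := by
  obtain ⟨S, hS, -, -, hpos, hneg⟩ := s.toJordanDecomposition.exists_compl_positive_negative
  refine ⟨Sᶜ, hS.compl, ?_⟩
  rw [s.apply_eq_toReal_sub hS.compl, s.apply_eq_toReal_sub hS.compl.compl, compl_compl,
    tvNorm_eq_toReal_add, ← measure_add_measure_compl hS.compl, ← measure_add_measure_compl hS,
    compl_compl, hpos, hneg]
  simp

lemma tvNorm_add_le (a b : SignedMeasure ℝ) : tvNorm (a + b) ≤ tvNorm a + tvNorm b := by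
  obtain ⟨B, hB, hEq⟩ := exists_tvNorm_eq (a + b)
  rw [hEq, add_apply, add_apply]
  linarith [sub_apply_compl_le_tvNorm a hB, sub_apply_compl_le_tvNorm b hB]

lemma tvNorm_neg : tvNorm (-s) = tvNorm s := by
  rw [tvNorm, SignedMeasure.totalVariation_neg, tvNorm]

lemma tvNorm_sub_comm (a b : SignedMeasure ℝ) : tvNorm (a - b) = tvNorm (b - a) := by
  rw [← neg_sub, tvNorm_neg]

lemma eq_zero_of_tvNorm_eq_zero (h : tvNorm s = 0) : s = 0 := by
  ext A -
  simpa [h] using abs_apply_le_tvNorm s A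

lemma tvNorm_eq_apply_univ_of_nonneg (hs : ∀ A, 0 ≤ s A) : tvNorm s = s univ := by
  obtain ⟨B, hB, hEq⟩ := exists_tvNorm_eq s
  have hsplit : s univ = s B + s Bᶜ := by
    rw [← VectorMeasure.of_union disjoint_compl_right hB hB.compl, union_compl_self]
  refine le_antisymm ?_ ?_
  · linarith [hs B, hs Bᶜ]
  · simpa using sub_apply_compl_le_tvNorm s MeasurableSet.univ

lemma tendsto_apply_of_tendsto_tvNorm_sub {μ : ℕ → SignedMeasure ℝ} {ν : SignedMeasure ℝ}
    (h : Tendsto (fun n => tvNorm (μ n - ν)) atTop (𝓝 0)) (A : Set ℝ) :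
    Tendsto (fun n => μ n A) atTop (𝓝 (ν A)) := by
  rw [tendsto_iff_norm_sub_tendsto_zero]
  refine squeeze_zero (fun _ => norm_nonneg _) (fun n => ?_) h
  simpa [Real.norm_eq_abs] using abs_apply_le_tvNorm (μ n - ν) A

lemma tvNorm_withDensityᵥ_le {μ : Measure ℝ} {g : ℝ → ℝ} (hg : Integrable g μ) :
    tvNorm (μ.withDensityᵥ g) ≤ ∫ x, |g x| ∂μ := by
  obtain ⟨B, hB, hEq⟩ := exists_tvNorm_eq (μ.withDensityᵥ g)
  rw [hEq, withDensityᵥ_apply hg hB, withDensityᵥ_apply hg hB.compl,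
    ← integral_add_compl hB hg.abs]
  have hInt := abs_integral_le_integral_abs (f := g) (μ := μ.restrict B)
  have hIntc := abs_integral_le_integral_abs (f := g) (μ := μ.restrict Bᶜ)
  rw [abs_le] at hInt hIntc
  linarith [hInt.2, hIntc.1]

end TotalVariation

section Markov

variable {L : SignedMeasure ℝ →ₗ[ℝ] SignedMeasure ℝ}

/-- Split `m` into its Jordan parts: `L` preserves the mass of each. -/
lemma IsMarkov.tvNorm_map_le (hL : IsMarkov L) (m : SignedMeasure ℝ) :
    tvNorm (L m) ≤ tvNorm m := by
  set p := m.toJordanDecomposition.posPart.toSignedMeasure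
  set q := m.toJordanDecomposition.negPart.toSignedMeasure
  have hp := Measure.toSignedMeasure_apply_nonneg m.toJordanDecomposition.posPart
  have hq := Measure.toSignedMeasure_apply_nonneg m.toJordanDecomposition.negPart
  have hm : L m = L p + -L q := by
    rw [← map_neg, ← map_add, ← sub_eq_add_neg]
    exact congrArg L m.toSignedMeasure_toJordanDecomposition.symm
  calc tvNorm (L m) ≤ tvNorm (L p) + tvNorm (L q) := by
        rw [hm, ← tvNorm_neg (L q)]; exact tvNorm_add_le _ _
    _ = p univ + q univ := by
        rw [tvNorm_eq_apply_univ_of_nonneg _ (hL.1 p hp),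
          tvNorm_eq_apply_univ_of_nonneg _ (hL.1 q hq), hL.2, hL.2]
    _ = tvNorm m := by
        rw [tvNorm_eq_toReal_add, Measure.toSignedMeasure_apply_measurable MeasurableSet.univ,
          Measure.toSignedMeasure_apply_measurable MeasurableSet.univ, measureReal_def,
          measureReal_def]

lemma IsMarkov.iterate_nonneg (hL : IsMarkov L) {m : SignedMeasure ℝ} (hm : ∀ A, 0 ≤ m A)
    (n : ℕ) : ∀ A, 0 ≤ (⇑L)^[n] m A := by
  induction n with
  | zero => exact hm
  | succ n ih => rw [Function.iterate_succ_apply']; exact hL.1 _ ih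

lemma IsMarkov.iterate_apply_univ (hL : IsMarkov L) (m : SignedMeasure ℝ) (n : ℕ) :
    (⇑L)^[n] m univ = m univ := by
  induction n with
  | zero => rfl
  | succ n ih => rw [Function.iterate_succ_apply', hL.2, ih]

lemma iterate_map_sub_self (m : SignedMeasure ℝ) (n : ℕ) :
    (⇑L)^[n] (L m - m) = (⇑L)^[n + 1] m - (⇑L)^[n] m := by
  induction n with
  | zero => rfl
  | succ n ih =>
    rw [Function.iterate_succ_apply', ih, map_sub, ← Function.iterate_succ_apply' L (n + 1),
      ← Function.iterate_succ_apply' L n]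

lemma map_eq_of_tendsto_tvNorm (hL : ∀ m, tvNorm (L m) ≤ tvNorm m) {m ν : SignedMeasure ℝ}
    (hstep : Tendsto (fun n => tvNorm ((⇑L)^[n + 1] m - (⇑L)^[n] m)) atTop (𝓝 0))
    {ψ : ℕ → ℕ} (hψ : Tendsto ψ atTop atTop)
    (hconv : Tendsto (fun j => tvNorm ((⇑L)^[ψ j] m - ν)) atTop (𝓝 0)) :
    L ν = ν := by
  set d := fun j => tvNorm ((⇑L)^[ψ j] m - ν)
  have hbound : ∀ j, tvNorm (L ν - ν) ≤ d j + (tvNorm ((⇑L)^[ψ j + 1] m - (⇑L)^[ψ j] m) + d j) := by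
    intro j
    have hsplit : L ν - ν = L (ν - (⇑L)^[ψ j] m)
        + (((⇑L)^[ψ j + 1] m - (⇑L)^[ψ j] m) + ((⇑L)^[ψ j] m - ν)) := by
      rw [map_sub, Function.iterate_succ_apply']; abel
    rw [hsplit]
    refine (tvNorm_add_le _ _).trans (add_le_add ?_ (tvNorm_add_le _ _))
    exact (hL _).trans_eq (tvNorm_sub_comm _ _)
  have hlim := hconv.add ((hstep.comp hψ).add hconv)
  simp only [add_zero] at hlim
  have h0 : tvNorm (L ν - ν) = 0 :=
    le_antisymm (ge_of_tendsto hlim (Eventually.of_forall hbound)) ENNReal.toReal_nonneg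
  exact sub_eq_zero.mp (eq_zero_of_tvNorm_eq_zero _ h0)

lemma eq_zero_of_map_eq_of_tendsto_tvNorm {d : SignedMeasure ℝ} (hd : L d = d)
    (hmix : Tendsto (fun n => tvNorm ((⇑L)^[n] d)) atTop (𝓝 0)) : d = 0 := by
  simp only [Function.iterate_fixed hd] at hmix
  exact eq_zero_of_tvNorm_eq_zero _ (tendsto_nhds_unique tendsto_const_nhds hmix)

end Markov

section BoundedVariation

lemma eVariationOn_sub_le {α : Type*} [LinearOrder α] (f g : α → ℝ) (s : Set α) :
    eVariationOn (f - g) s ≤ eVariationOn f s + eVariationOn g s := by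
  refine iSup_le fun ⟨n, u, hu, us⟩ => ?_
  calc ∑ i ∈ Finset.range n, edist ((f - g) (u (i + 1))) ((f - g) (u i))
      ≤ ∑ i ∈ Finset.range n, (edist (f (u (i + 1))) (f (u i)) + edist (g (u (i + 1))) (g (u i))) :=
        Finset.sum_le_sum fun i _ => by
          simpa only [Pi.sub_apply, sub_eq_add_neg, edist_neg_neg] using
            edist_add_add_le (f (u (i + 1))) (-g (u (i + 1))) (f (u i)) (-g (u i))
    _ ≤ eVariationOn f s + eVariationOn g s := by
        rw [Finset.sum_add_distrib]
        exact add_le_add (eVariationOn.sum_le hu us) (eVariationOn.sum_le hu us)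

lemma IsBVDensity.sub {m₁ m₂ : SignedMeasure ℝ} {h₁ h₂ : ℝ → ℝ} (H₁ : IsBVDensity m₁ h₁)
    (H₂ : IsBVDensity m₂ h₂) : IsBVDensity (m₁ - m₂) (h₁ - h₂) := by
  obtain ⟨⟨hi₁, hs₁, rfl⟩, hv₁⟩ := H₁
  obtain ⟨⟨hi₂, hs₂, rfl⟩, hv₂⟩ := H₂
  refine ⟨⟨hi₁.sub hi₂, fun x hx => by simp [hs₁ x hx, hs₂ x hx], ?_⟩, ?_⟩
  · exact (withDensityᵥ_sub' hi₁ hi₂).symm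
  · exact ne_top_of_le_ne_top (ENNReal.add_ne_top.mpr ⟨hv₁, hv₂⟩) (eVariationOn_sub_le h₁ h₂ II)

/-- Averaging `|h x| - |h y| ≤ Var h` over `y ∈ [0,1]`, an interval of length one. -/
lemma abs_le_bvNorm {h : ℝ → ℝ} (hint : IntegrableOn h II) (hbv : BoundedVariationOn h II)
    {x : ℝ} (hx : x ∈ II) : |h x| ≤ bvNorm h := by
  have hvol : volume.real II = 1 := by simp [measureReal_def]
  have key : ∀ y ∈ II, |h x| - (eVariationOn h II).toReal ≤ |h y| := fun y hy => by
    have := hbv.dist_le hx hy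
    rw [Real.dist_eq] at this
    linarith [abs_sub_abs_le_abs_sub (h x) (h y)]
  have := setIntegral_mono_on (integrableOn_const (by simp)) hint.abs measurableSet_Icc key
  rw [setIntegral_const, hvol, one_smul] at this
  rw [bvNorm]; linarith

end BoundedVariation

section Helly

lemma tendsto_of_continuousAt_of_tendsto_rat {u : ℕ → ℝ → ℝ} (hu : ∀ n, Monotone (u n))
    {c : ℚ → ℝ} (hc : ∀ q : ℚ, Tendsto (fun n => u n q) atTop (𝓝 (c q))) {v : ℝ → ℝ}
    (hcv : ∀ (q : ℚ) (x : ℝ), q < x → c q ≤ v x) (hvc : ∀ (x : ℝ) (q : ℚ), x ≤ q → v x ≤ c q)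
    {x : ℝ} (hx : ContinuousAt v x) : Tendsto (fun n => u n x) atTop (𝓝 (v x)) := by
  refine tendsto_order.2 ⟨fun a ha => ?_, fun b hb => ?_⟩
  · obtain ⟨y, hyx, hay⟩ := (hx.eventually (lt_mem_nhds ha)).exists_lt
    obtain ⟨q, hyq, hqx⟩ := exists_rat_btwn hyx
    filter_upwards [(hc q).eventually (lt_mem_nhds (hay.trans_le (hvc y q hyq.le)))] with n hn
    exact hn.trans_le (hu n hqx.le)
  · obtain ⟨y, hxy, hyb⟩ := (hx.eventually (gt_mem_nhds hb)).exists_gt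
    obtain ⟨q, hxq, hqy⟩ := exists_rat_btwn hxy
    filter_upwards [(hc q).eventually (gt_mem_nhds ((hcv q y hqy).trans_lt hyb))] with n hn
    exact (hu n hxq.le).trans_lt hn

/-- **Helly's selection theorem**: extract a subsequence converging on the rationals, and
hence at every continuity point of the limit; a monotone limit has countably many others. -/
theorem exists_subseq_tendsto_of_monotone {M : ℝ} {u : ℕ → ℝ → ℝ} (hu : ∀ n, Monotone (u n))
    (hM : ∀ n x, |u n x| ≤ M) :
    ∃ φ : ℕ → ℕ, StrictMono φ ∧ ∃ v : ℝ → ℝ, Monotone v ∧ (∀ x, |v x| ≤ M) ∧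
      {x | ¬Tendsto (fun j => u (φ j) x) atTop (𝓝 (v x))}.Countable := by
  obtain ⟨G, φ, hφ, hG⟩ := SeqCompactSpace.tendsto_subseq
    fun n (q : ℚ) => (⟨u n q, abs_le.1 (hM n q)⟩ : Icc (-M) M)
  set c : ℚ → ℝ := fun q => G q
  have hc : ∀ q : ℚ, Tendsto (fun j => u (φ j) q) atTop (𝓝 (c q)) := fun q =>
    (continuous_subtype_val.tendsto _).comp (tendsto_pi_nhds.1 hG q)
  have hcmono : Monotone c := fun q r hqr =>
    le_of_tendsto_of_tendsto' (hc q) (hc r) fun j => hu _ (Rat.cast_le.2 hqr)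
  set v : ℝ → ℝ := fun x => sSup (c '' {q | (q : ℝ) < x})
  have hne : ∀ x, (c '' {q : ℚ | (q : ℝ) < x}).Nonempty := fun x =>
    Nonempty.image c (exists_rat_lt x)
  have hle : ∀ x, ∀ y ∈ c '' {q : ℚ | (q : ℝ) < x}, y ≤ M := by
    rintro x _ ⟨q, -, rfl⟩; exact (G q).2.2
  have hcv : ∀ (q : ℚ) (x : ℝ), q < x → c q ≤ v x := fun q x hqx =>
    le_csSup ⟨M, hle x⟩ ⟨q, hqx, rfl⟩
  have hvc : ∀ (x : ℝ) (q : ℚ), x ≤ q → v x ≤ c q := by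
    rintro x q hxq
    refine csSup_le (hne x) ?_
    rintro _ ⟨r, hr, rfl⟩
    exact hcmono (Rat.cast_le.1 (hr.trans_le hxq).le)
  have hvmono : Monotone v := fun x y hxy =>
    csSup_le_csSup ⟨M, hle y⟩ (hne x) (image_mono fun q hq => lt_of_lt_of_le hq hxy)
  refine ⟨φ, hφ, v, hvmono, fun x => abs_le.2 ⟨?_, csSup_le (hne x) (hle x)⟩, ?_⟩
  · obtain ⟨q, hq⟩ := exists_rat_lt x
    exact (G q).2.1.trans (hcv q x hq)
  · exact hvmono.countable_not_continuousAt.mono fun x =>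
      mt (tendsto_of_continuousAt_of_tendsto_rat (fun j => hu (φ j)) hc hcv hvc)

end Helly

section Compactness

/-- Jordan decomposition `f = V - (V - f)` with `V x = Var_{[0,x]} f`, extended constantly
outside `[0,1]`. -/
lemma exists_monotone_sub_of_bvNorm_le {f : ℝ → ℝ} {K : ℝ} (hint : IntegrableOn f II)
    (hbv : BoundedVariationOn f II) (hK : bvNorm f ≤ K) :
    ∃ p q : ℝ → ℝ, Monotone p ∧ Monotone q ∧ (∀ x, |p x| ≤ K) ∧ (∀ x, |q x| ≤ 2 * K) ∧
      EqOn f (p - q) II := by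
  have hvar : (eVariationOn f II).toReal ≤ K := by
    have : 0 ≤ ∫ x in II, |f x| := by positivity
    rw [bvNorm] at hK
    linarith
  set π : ℝ → ℝ := fun x => projIcc 0 1 zero_le_one x
  have hπ : Monotone π := fun x y hxy => monotone_projIcc zero_le_one hxy
  have hπII : ∀ x, π x ∈ II := fun x => (projIcc 0 1 zero_le_one x).2
  have h0 : (0 : ℝ) ∈ II := left_mem_Icc.2 zero_le_one
  set V := variationOnFromTo f II 0
  have hVK : ∀ x, |V x| ≤ K := fun x => (variationOnFromTo.abs_le_eVariationOn hbv).trans hvar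
  refine ⟨V ∘ π, (V - f) ∘ π, fun x y hxy => ?_, fun x y hxy => ?_, fun x => hVK _,
    fun x => ?_, fun x hx => ?_⟩
  · exact variationOnFromTo.monotoneOn hbv.locallyBoundedVariationOn h0 (hπII x) (hπII y) (hπ hxy)
  · exact variationOnFromTo.sub_self_monotoneOn hbv.locallyBoundedVariationOn h0 (hπII x) (hπII y)
      (hπ hxy)
  · show |V (π x) - f (π x)| ≤ 2 * K
    linarith [abs_sub (V (π x)) (f (π x)), hVK (π x), abs_le_bvNorm hint hbv (hπII x)]
  · simp [π, projIcc_of_mem zero_le_one hx]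

lemma tendsto_integral_abs_sub_of_ae_tendsto {α : Type*} [MeasurableSpace α] {μ : Measure α}
    {s : Set α} (hs : MeasurableSet s) (hμs : μ s ≠ ⊤) {f : ℕ → α → ℝ} {F : α → ℝ} {M : ℝ}
    (hf : ∀ n, AEStronglyMeasurable (f n) μ) (hfs : ∀ n, ∀ x ∉ s, f n x = 0)
    (hFs : ∀ x ∉ s, F x = 0) (hfM : ∀ n, ∀ x ∈ s, |f n x| ≤ M) (hFM : ∀ x ∈ s, |F x| ≤ M)
    (hlim : ∀ᵐ x ∂μ, Tendsto (fun n => f n x) atTop (𝓝 (F x))) :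
    Tendsto (fun n => ∫ x, |f n x - F x| ∂μ) atTop (𝓝 0) := by
  have hF := aestronglyMeasurable_of_tendsto_ae atTop hf hlim
  have hbound (n : ℕ) (x : α) : ‖|f n x - F x|‖ ≤ s.indicator (fun _ => 2 * M) x := by
    by_cases hx : x ∈ s
    · rw [indicator_of_mem hx, norm_abs_eq_norm, Real.norm_eq_abs]
      linarith [abs_sub (f n x) (F x), hfM n x hx, hFM x hx]
    · simp [hx, hfs n x hx, hFs x hx]
  simpa using tendsto_integral_of_dominated_convergence (F := fun n x => |f n x - F x|)
    (f := fun _ => 0) _ (fun n => ((hf n).sub hF).norm)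
    ((integrable_indicator_iff hs).2 (integrableOn_const hμs))
    (fun n => ae_of_all _ (hbound n))
    (hlim.mono fun x hx => by simpa using (hx.sub_const (F x)).abs)

theorem exists_subseq_tendsto_integral_abs_sub {f : ℕ → ℝ → ℝ} {K : ℝ}
    (hint : ∀ n, Integrable (f n)) (hsupp : ∀ n, ∀ x ∉ II, f n x = 0)
    (hbv : ∀ n, BoundedVariationOn (f n) II) (hK : ∀ n, bvNorm (f n) ≤ K) :
    ∃ ψ : ℕ → ℕ, StrictMono ψ ∧ ∃ F : ℝ → ℝ, Integrable F ∧ (∀ x ∉ II, F x = 0) ∧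
      Tendsto (fun j => ∫ x, |f (ψ j) x - F x|) atTop (𝓝 0) := by
  choose p q hp hq hpK hqK hpq using fun n =>
    exists_monotone_sub_of_bvNorm_le (hint n).integrableOn (hbv n) (hK n)
  obtain ⟨φ₁, hφ₁, vp, hvp, hvpK, hcp⟩ := exists_subseq_tendsto_of_monotone hp hpK
  obtain ⟨φ₂, hφ₂, vq, hvq, hvqK, hcq⟩ :=
    exists_subseq_tendsto_of_monotone (fun j => hq (φ₁ j)) (fun j => hqK (φ₁ j))
  have hK0 : 0 ≤ K := (abs_nonneg _).trans (hpK 0 0)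
  have hFK : ∀ x, |vp x - vq x| ≤ 3 * K := fun x => by
    linarith [abs_sub (vp x) (vq x), hvpK x, hvqK x]
  set F := II.indicator (vp - vq)
  have hlim : ∀ᵐ x, Tendsto (fun j => f (φ₁ (φ₂ j)) x) atTop (𝓝 (F x)) := by
    filter_upwards [measure_eq_zero_iff_ae_notMem.1 ((hcp.union hcq).measure_zero volume)]
      with x hx
    simp only [mem_union, mem_ofPred_eq, not_or, not_not] at hx
    by_cases hxII : x ∈ II
    · simp only [F, indicator_of_mem hxII]
      exact ((hx.1.comp hφ₂.tendsto_atTop).sub hx.2).congr fun j => (hpq _ hxII).symm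
    · simp only [F, indicator_of_notMem hxII, hsupp _ x hxII]
      exact tendsto_const_nhds
  refine ⟨φ₁ ∘ φ₂, hφ₁.comp hφ₂, F, ?_, fun x hx => indicator_of_notMem hx _, ?_⟩
  · exact (integrable_indicator_iff measurableSet_Icc).2 <|
      Integrable.of_bound (hvp.measurable.sub hvq.measurable).aestronglyMeasurable (3 * K)
        (ae_of_all _ hFK)
  · refine tendsto_integral_abs_sub_of_ae_tendsto measurableSet_Icc (by simp) (M := 3 * K)
      (fun j => (hint _).aestronglyMeasurable) (fun j => hsupp _)
      (fun x hx => indicator_of_notMem hx _)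
      (fun j x hx => ?_) (fun x hx => by simpa [F, indicator_of_mem hx] using hFK x) hlim
    show |f (φ₁ (φ₂ j)) x| ≤ 3 * K
    linarith [abs_le_bvNorm (hint (φ₁ (φ₂ j))).integrableOn (hbv _) hx, hK (φ₁ (φ₂ j))]

lemma exists_subseq_tendsto_tvNorm_of_bvNorm_le {μ : ℕ → SignedMeasure ℝ} {g : ℕ → ℝ → ℝ}
    {K : ℝ} (hg : ∀ n, IsBVDensity (μ n) (g n)) (hK : ∀ n, bvNorm (g n) ≤ K) :
    ∃ ψ : ℕ → ℕ, StrictMono ψ ∧ ∃ ν F, IsL1Density ν F ∧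
      Tendsto (fun j => tvNorm (μ (ψ j) - ν)) atTop (𝓝 0) := by
  obtain ⟨ψ, hψ, F, hF, hFs, hlim⟩ := exists_subseq_tendsto_integral_abs_sub
    (fun n => (hg n).1.1) (fun n => (hg n).1.2.1) (fun n => (hg n).2) hK
  refine ⟨ψ, hψ, _, F, ⟨hF, hFs, rfl⟩,
    squeeze_zero (fun _ => ENNReal.toReal_nonneg) (fun j => ?_) hlim⟩
  rw [(hg (ψ j)).1.2.2, ← withDensityᵥ_sub' (hg _).1.1 hF]
  exact tvNorm_withDensityᵥ_le ((hg _).1.1.sub hF)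

end Compactness

section FixedPoint

def IsMixingOnBV (L : SignedMeasure ℝ → SignedMeasure ℝ) : Prop :=
  ∀ (g : SignedMeasure ℝ) (h : ℝ → ℝ), IsBVDensity g h → g univ = 0 →
    Tendsto (fun n : ℕ => tvNorm (L^[n] g)) atTop (𝓝 0)

def IsBVRegularizing (L : SignedMeasure ℝ → SignedMeasure ℝ) (K : ℝ) : Prop :=
  ∀ (m : SignedMeasure ℝ) (h : ℝ → ℝ), IsL1Density m h →
    ∃ h' : ℝ → ℝ, IsBVDensity (L m) h' ∧ bvNorm h' ≤ K * tvNorm m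

lemma isBVDensity_indicator_one :
    IsBVDensity (volume.withDensityᵥ (II.indicator 1)) (II.indicator 1) := by
  refine ⟨⟨(integrable_indicator_iff measurableSet_Icc).2 (integrableOn_const (by simp)),
    fun x hx => indicator_of_notMem hx _, rfl⟩, ?_⟩
  rw [eVariationOn.constant_on]
  · exact ENNReal.zero_ne_top
  · rintro _ ⟨a, ha, rfl⟩ _ ⟨b, hb, rfl⟩
    simp [indicator_of_mem ha, indicator_of_mem hb]

variable {L : SignedMeasure ℝ →ₗ[ℝ] SignedMeasure ℝ} {K : ℝ}

lemma IsBVRegularizing.exists_isBVDensity_iterate (hL : IsMarkov L) (hreg : IsBVRegularizing L K)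
    {m : SignedMeasure ℝ} {h : ℝ → ℝ} (hm : IsL1Density m h) (hpos : ∀ A, 0 ≤ m A)
    (hmass : m univ = 1) (n : ℕ) :
    ∃ h' : ℝ → ℝ, IsBVDensity ((⇑L)^[n + 1] m) h' ∧ bvNorm h' ≤ K := by
  have hL1 : ∀ n, ∃ h', IsL1Density ((⇑L)^[n] m) h' := by
    intro n
    induction n with
    | zero => exact ⟨h, hm⟩
    | succ n ih =>
      obtain ⟨h', hh'⟩ := ih
      obtain ⟨h'', hh'', -⟩ := hreg _ h' hh'
      exact ⟨h'', by rw [Function.iterate_succ_apply']; exact hh''.1⟩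
  obtain ⟨h', hh'⟩ := hL1 n
  obtain ⟨h'', hh'', hK⟩ := hreg _ h' hh'
  rw [tvNorm_eq_apply_univ_of_nonneg _ (hL.iterate_nonneg hpos n), hL.iterate_apply_univ, hmass,
    mul_one] at hK
  exact ⟨h'', by rw [Function.iterate_succ_apply']; exact hh'', hK⟩

theorem exists_fixed_probability (hL : IsMarkov L) (hmix : IsMixingOnBV L)
    (hreg : IsBVRegularizing L K) :
    ∃ ν : SignedMeasure ℝ, (∃ h : ℝ → ℝ, IsBVDensity ν h) ∧ (∀ A, 0 ≤ ν A) ∧ ν univ = 1 ∧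
      L ν = ν := by
  set m := volume.withDensityᵥ (II.indicator (1 : ℝ → ℝ))
  have hm : IsBVDensity m _ := isBVDensity_indicator_one
  have hpos : ∀ A, 0 ≤ m A :=
    withDensityᵥ_apply_nonneg hm.1.1 (indicator_nonneg fun _ _ => zero_le_one)
  have hmass : m univ = 1 := by simp [m, withDensityᵥ_apply hm.1.1 MeasurableSet.univ]
  choose g hg hgK using hreg.exists_isBVDensity_iterate hL hm.1 hpos hmass
  obtain ⟨ψ, hψ, ν, F, hνF, hconv⟩ := exists_subseq_tendsto_tvNorm_of_bvNorm_le hg hgK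
  have hstep := hmix (L m - m) _ ((hg 0).sub hm) (by rw [sub_apply, hL.2, sub_self])
  simp only [iterate_map_sub_self] at hstep
  have hfix : L ν = ν := map_eq_of_tendsto_tvNorm hL.tvNorm_map_le hstep
    ((tendsto_add_atTop_nat 1).comp hψ.tendsto_atTop) hconv
  obtain ⟨h, hh, -⟩ := hreg ν F hνF
  refine ⟨ν, ⟨h, hfix ▸ hh⟩, fun A => ?_, ?_, hfix⟩
  · exact ge_of_tendsto (tendsto_apply_of_tendsto_tvNorm_sub hconv A)
      (Eventually.of_forall fun j => hL.iterate_nonneg hpos _ A)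
  · refine tendsto_nhds_unique (tendsto_apply_of_tendsto_tvNorm_sub hconv univ) ?_
    simp only [hL.iterate_apply_univ, hmass, tendsto_const_nhds]

lemma IsMixingOnBV.eq_of_map_eq (hmix : IsMixingOnBV L) {μ ν : SignedMeasure ℝ} {f g : ℝ → ℝ}
    (hμ : IsBVDensity μ f) (hν : IsBVDensity ν g) (hmass : μ univ = ν univ) (hμL : L μ = μ)
    (hνL : L ν = ν) : μ = ν :=
  sub_eq_zero.1 <| eq_zero_of_map_eq_of_tendsto_tvNorm (by rw [map_sub, hμL, hνL])
    (hmix _ _ (hμ.sub hν) (by rw [sub_apply, hmass, sub_self]))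

end FixedPoint

/-- a Markov operator which is mixing on zero-average BV measures and
regularizing from `L¹` to `BV` has a unique fixed probability measure, which has a
bounded variation density. -/
theorem exists_unique_fixed_probability
    (L₀ : MeasureTheory.SignedMeasure ℝ →ₗ[ℝ] MeasureTheory.SignedMeasure ℝ)
    (hMarkov : IsMarkov ⇑L₀)
    (hmix : ∀ (g : MeasureTheory.SignedMeasure ℝ) (h : ℝ → ℝ), IsBVDensity g h →
      g Set.univ = 0 →
      Filter.Tendsto (fun n : ℕ => tvNorm ((⇑L₀)^[n] g)) Filter.atTop (nhds 0))
    (hreg : ∃ K : ℝ, ∀ (m : MeasureTheory.SignedMeasure ℝ) (h : ℝ → ℝ),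
      IsL1Density m h →
      ∃ h' : ℝ → ℝ, IsBVDensity (L₀ m) h' ∧ bvNorm h' ≤ K * tvNorm m) :
    ∃! f₀ : MeasureTheory.SignedMeasure ℝ,
      (∃ h : ℝ → ℝ, IsBVDensity f₀ h) ∧
      (∀ A : Set ℝ, 0 ≤ f₀ A) ∧ f₀ Set.univ = 1 ∧ L₀ f₀ = f₀ := by
  obtain ⟨K, hK⟩ := hreg
  obtain ⟨ν, hν⟩ := exists_fixed_probability hMarkov hmix hK
  refine ⟨ν, hν, ?_⟩
  rintro μ ⟨⟨f, hμ⟩, -, hμ1, hμL⟩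
  obtain ⟨⟨g, hν'⟩, -, hν1, hνL⟩ := hν
  exact IsMixingOnBV.eq_of_map_eq hmix hμ hν' (hμ1.trans hν1.symm) hμL hνL
end
end

section
/- Let D_δ = Id + δS : [0,1] → [0,1] be a family of continuous bijections where S is 1-Lipschitz with S(0) = S(1) = 0, and let T : [0,1] → [0,1] be a nonsingular Borel map. Then the transfer operators satisfy ‖L_{D_δ ∘ T} f − L_T f‖_W ≤ δ ‖f‖₁ for all f ∈ L¹([0,1]). -/
open MeasureTheory Set Filter
open scoped ENNReal NNReal

noncomputable section

/-!
Pair the signed measure with a test function `g` (bounded by 1 and 1-Lipschitz). Splitting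
`f = f⁺ - f⁻` shows that this pairing is linear in the measure and turns pushforwards into
composition, so it equals `∫ f (g ∘ D_δ ∘ T - g ∘ T)`. On `[0,1]`,
`|g (D_δ y) - g y| ≤ δ |S y| ≤ δ |y| ≤ δ` because `S 0 = 0`, and `f` vanishes off `[0,1]`.
-/

namespace MeasureTheory

variable {α β : Type*} [MeasurableSpace α] [MeasurableSpace β]

theorem Measure.toSignedMeasure_map (μ : Measure α) [IsFiniteMeasure μ] {φ : α → β}
    (hφ : Measurable φ) : μ.toSignedMeasure.map φ = (μ.map φ).toSignedMeasure := by
  ext s hs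
  rw [VectorMeasure.map_apply _ hφ hs, Measure.toSignedMeasure_apply_measurable (hφ hs),
    Measure.toSignedMeasure_apply_measurable hs, map_measureReal_apply hφ hs]

theorem integral_withDensity_ofReal_sub {μ : Measure α} {f : α → ℝ} (hf : Integrable f μ)
    {h : α → ℝ} (hh : AEStronglyMeasurable h μ) {C : ℝ} (hhC : ∀ x, ‖h x‖ ≤ C) :
    ∫ x, h x ∂μ.withDensity (fun x => ENNReal.ofReal (f x)) -
      ∫ x, h x ∂μ.withDensity (fun x => ENNReal.ofReal (-f x)) = ∫ x, f x * h x ∂μ := by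
  have hpart {u : α → ℝ} (hu : Integrable u μ) :
      ∫ x, h x ∂μ.withDensity (fun x => ENNReal.ofReal (u x)) = ∫ x, max (u x) 0 * h x ∂μ :=
    integral_withDensity_eq_integral_smul₀ hu.aemeasurable.real_toNNReal h
  have hint {u : α → ℝ} (hu : Integrable u μ) : Integrable (fun x => max (u x) 0 * h x) μ :=
    hu.real_toNNReal.mul_bdd hh (.of_forall hhC)
  rw [hpart hf, hpart (u := fun x => -f x) hf.neg,
    ← integral_sub (hint hf) (hint (u := fun x => -f x) hf.neg)]
  simp only [← sub_mul, max_zero_sub_max_neg_zero_eq_self]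

theorem integral_mul_le_of_abs_le_on {μ : Measure α} {f u : α → ℝ} (hf : Integrable f μ)
    {s : Set α} (hfs : ∀ x ∉ s, f x = 0) {δ : ℝ} (hu : ∀ x ∈ s, |u x| ≤ δ) :
    ∫ x, f x * u x ∂μ ≤ δ * ∫ x in s, |f x| ∂μ := by
  have hbound (x : α) : ‖f x * u x‖ ≤ δ * |f x| := by
    by_cases hx : x ∈ s
    · rw [Real.norm_eq_abs, abs_mul, mul_comm]
      exact mul_le_mul_of_nonneg_right (hu x hx) (abs_nonneg _)
    · simp [hfs x hx]
  rw [setIntegral_eq_integral_of_forall_compl_eq_zero fun x hx => by simp [hfs x hx],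
    ← integral_const_mul]
  exact (le_abs_self _).trans <|
    norm_integral_le_of_norm_le (hf.abs.const_mul δ) (.of_forall hbound)

namespace SignedMeasure

def jordanIntegral (m : SignedMeasure α) (g : α → ℝ) : ℝ :=
  ∫ x, g x ∂m.toJordanDecomposition.posPart - ∫ x, g x ∂m.toJordanDecomposition.negPart

theorem posPart_add_eq_add_negPart {m : SignedMeasure α} {μ ν : Measure α} [IsFiniteMeasure μ]
    [IsFiniteMeasure ν] (hm : m = μ.toSignedMeasure - ν.toSignedMeasure) :
    m.toJordanDecomposition.posPart + ν = μ + m.toJordanDecomposition.negPart := by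
  have hsub : m.toJordanDecomposition.posPart.toSignedMeasure -
      m.toJordanDecomposition.negPart.toSignedMeasure =
      μ.toSignedMeasure - ν.toSignedMeasure := by
    rw [← hm, ← JordanDecomposition.toSignedMeasure, toSignedMeasure_toJordanDecomposition]
  rw [← Measure.toSignedMeasure_eq_toSignedMeasure_iff, Measure.toSignedMeasure_add,
    Measure.toSignedMeasure_add]
  exact sub_eq_sub_iff_add_eq_add.mp hsub

theorem jordanIntegral_eq_integral_sub_integral {m : SignedMeasure α} {μ ν : Measure α}
    [IsFiniteMeasure μ] [IsFiniteMeasure ν] (hm : m = μ.toSignedMeasure - ν.toSignedMeasure)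
    {g : α → ℝ} (hg : Measurable g) {C : ℝ} (hgC : ∀ x, ‖g x‖ ≤ C) :
    m.jordanIntegral g = ∫ x, g x ∂μ - ∫ x, g x ∂ν := by
  have hint (ρ : Measure α) [IsFiniteMeasure ρ] : Integrable g ρ :=
    .of_bound hg.aestronglyMeasurable C (.of_forall hgC)
  have h := congrArg (fun ρ => ∫ x, g x ∂ρ) (posPart_add_eq_add_negPart hm)
  simp only [integral_add_measure (hint _) (hint _)] at h
  rw [jordanIntegral]
  linarith

theorem jordanIntegral_sub (m₁ m₂ : SignedMeasure α) {g : α → ℝ} (hg : Measurable g) {C : ℝ}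
    (hgC : ∀ x, ‖g x‖ ≤ C) :
    (m₁ - m₂).jordanIntegral g = m₁.jordanIntegral g - m₂.jordanIntegral g := by
  have hm : m₁ - m₂ =
      (m₁.toJordanDecomposition.posPart + m₂.toJordanDecomposition.negPart).toSignedMeasure -
        (m₁.toJordanDecomposition.negPart + m₂.toJordanDecomposition.posPart).toSignedMeasure := by
    conv_lhs => rw [← m₁.toSignedMeasure_toJordanDecomposition,
      ← m₂.toSignedMeasure_toJordanDecomposition]
    simp only [JordanDecomposition.toSignedMeasure, Measure.toSignedMeasure_add]
    abel
  have hint (ρ : Measure α) [IsFiniteMeasure ρ] : Integrable g ρ :=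
    .of_bound hg.aestronglyMeasurable C (.of_forall hgC)
  rw [jordanIntegral_eq_integral_sub_integral hm hg hgC, jordanIntegral, jordanIntegral,
    integral_add_measure (hint _) (hint _), integral_add_measure (hint _) (hint _)]
  ring

theorem jordanIntegral_map_withDensityᵥ {μ : Measure α} {f : α → ℝ}
    (hf : Integrable f μ) {φ : α → β} (hφ : Measurable φ) {g : β → ℝ} (hg : Measurable g)
    {C : ℝ} (hgC : ∀ x, ‖g x‖ ≤ C) :
    jordanIntegral ((μ.withDensityᵥ f).map φ) g = ∫ x, f x * g (φ x) ∂μ := by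
  have := isFiniteMeasure_withDensity_ofReal hf.2
  have := isFiniteMeasure_withDensity_ofReal hf.neg.2
  have hm : (μ.withDensityᵥ f).map φ =
      ((μ.withDensity fun x => ENNReal.ofReal (f x)).map φ).toSignedMeasure -
        ((μ.withDensity fun x => ENNReal.ofReal (-f x)).map φ).toSignedMeasure := by
    rw [withDensityᵥ_eq_withDensity_pos_part_sub_withDensity_neg_part hf,
      ← Measure.toSignedMeasure_map _ hφ, ← Measure.toSignedMeasure_map _ hφ]
    exact map_sub (VectorMeasure.mapGm φ) _ _
  rw [jordanIntegral_eq_integral_sub_integral hm hg hgC,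
    integral_map hφ.aemeasurable hg.aestronglyMeasurable,
    integral_map hφ.aemeasurable hg.aestronglyMeasurable]
  exact integral_withDensity_ofReal_sub hf (hg.comp hφ).aestronglyMeasurable fun x => hgC _

end SignedMeasure

end MeasureTheory

theorem LipschitzWith.abs_comp_add_mul_sub_le {g S : ℝ → ℝ} (hg : LipschitzWith 1 g)
    (hS : LipschitzWith 1 S) (hS0 : S 0 = 0) {δ : ℝ} (hδ : 0 ≤ δ) (y : ℝ) :
    |g (y + δ * S y) - g y| ≤ δ * |y| := by
  have hSy : |S y| ≤ |y| := by simpa [Real.dist_eq, hS0] using hS.dist_le_mul y 0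
  calc |g (y + δ * S y) - g y| ≤ |y + δ * S y - y| := by
        simpa [Real.dist_eq] using hg.dist_le_mul (y + δ * S y) y
    _ = δ * |S y| := by rw [add_sub_cancel_left, abs_mul, abs_of_nonneg hδ]
    _ ≤ δ * |y| := mul_le_mul_of_nonneg_left hSy hδ

theorem transfer_perturbation_Wnorm_general
    (δ : ℝ) (hδ : 0 ≤ δ)
    (S : ℝ → ℝ) (hS : LipschitzWith 1 S) (hS0 : S 0 = 0)
    (T : ℝ → ℝ) (hT : Nonsingular T)
    (f : ℝ → ℝ) (hf : MeasureTheory.Integrable f MeasureTheory.volume)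
    (hfsupp : ∀ x, x ∉ II → f x = 0) :
    Wnorm ((densSM f).map (fun x => T x + δ * S (T x)) - (densSM f).map T)
      ≤ δ * ∫ x in II, |f x| := by
  obtain ⟨hTm, hTII, -⟩ := hT
  have hDTm : Measurable fun x => T x + δ * S (T x) :=
    hTm.add ((hS.continuous.measurable.comp hTm).const_mul δ)
  have : Nonempty {g : ℝ → ℝ // (∀ x, |g x| ≤ 1) ∧ LipschitzWith 1 g} :=
    ⟨⟨0, by simp, LipschitzWith.const' 0⟩⟩
  refine ciSup_le fun ⟨g, hg1, hgL⟩ => ?_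
  have hgm : Measurable g := hgL.continuous.measurable
  have hgC (x : ℝ) : ‖g x‖ ≤ 1 := hg1 x
  have hint {φ : ℝ → ℝ} (hφ : Measurable φ) : Integrable (fun x => f x * g (φ x)) :=
    hf.mul_bdd (hgm.comp hφ).aestronglyMeasurable (.of_forall fun _ => hgC _)
  change SignedMeasure.jordanIntegral _ g ≤ _
  rw [SignedMeasure.jordanIntegral_sub _ _ hgm hgC, densSM,
    SignedMeasure.jordanIntegral_map_withDensityᵥ hf hDTm hgm hgC,
    SignedMeasure.jordanIntegral_map_withDensityᵥ hf hTm hgm hgC,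
    ← integral_sub (hint hDTm) (hint hTm)]
  simp only [← mul_sub]
  refine integral_mul_le_of_abs_le_on hf hfsupp fun x hx => ?_
  have hTx := hTII hx
  calc |g (T x + δ * S (T x)) - g (T x)| ≤ δ * |T x| := hgL.abs_comp_add_mul_sub_le hS hS0 hδ _
    _ ≤ δ * 1 := by gcongr; rw [abs_of_nonneg hTx.1]; exact hTx.2
    _ = δ := mul_one δ

/-- for `D_δ = Id + δS` with `S` 1-Lipschitz, `S(0)=S(1)=0`, and a
nonsingular Borel map `T`, the transfer operators satisfy
`‖L_{D_δ ∘ T} f − L_T f‖_W ≤ δ ‖f‖₁`. -/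
theorem transfer_perturbation_Wnorm
    (δ : ℝ) (hδ : 0 ≤ δ)
    (S : ℝ → ℝ) (hS : LipschitzWith 1 S) (hS0 : S 0 = 0) (hS1 : S 1 = 0)
    (hD : Set.BijOn (fun x => x + δ * S x) II II)
    (hDc : ContinuousOn (fun x => x + δ * S x) II)
    (T : ℝ → ℝ) (hT : Nonsingular T)
    (f : ℝ → ℝ) (hf : MeasureTheory.Integrable f MeasureTheory.volume)
    (hfsupp : ∀ x, x ∉ II → f x = 0) :
    Wnorm ((densSM f).map (fun x => T x + δ * S (T x)) - (densSM f).map T)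
      ≤ δ * ∫ x in II, |f x| :=
  transfer_perturbation_Wnorm_general δ hδ S hS hS0 T hT f hf hfsupp
end
end

section
/- Derivative of the uniform noise kernel with respect to noise radius: Let ρ_ξ = (a+ξ)^{-1} 1_{[−(a+ξ)/2, (a+ξ)/2]} for a > 0. Then in the Wasserstein–Kantorovich norm, lim_{ξ→0} ‖ (ρ_ξ − ρ₀)/ξ − ρ̇ ‖_W = 0 where ρ̇ = −a^{-2} 1_{[−a/2, a/2]} + (a^{-1}/2) δ_{−a/2} + (a^{-1}/2) δ_{a/2}, with δ_x the Dirac measure at x. -/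
open MeasureTheory Set Filter
open scoped ENNReal NNReal

noncomputable section

/-!
Against a test function `g` with `|g| ≤ 1` and `Lip g ≤ 1`, put `I(s) = ∫_{-s/2}^{s/2} g`.
Then `ρ_ξ` pairs to `I(a+ξ)/(a+ξ)` and `ρ̇` to `-I(a)/a² + (g(-a/2) + g(a/2))/(2a)`, the
derivative of `s ↦ I(s)/s` at `a`. As `g` is 1-Lipschitz, the two strips of width `ξ/2` give
`I(a+ξ) - I(a) = ξ/2 (g(-a/2) + g(a/2)) + O(ξ²)`, so the pairing of the error with `g` is
at most `(2/a² + 1/(2a)) ξ`, uniformly in `g`. The Jordan-decomposition pairing in `Wnorm` is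
the integral against a signed measure (`∫ᵛ`), which is linear in the measure.
-/

namespace MeasureTheory.SignedMeasure

variable {X : Type*} [MeasurableSpace X]

instance isFiniteMeasure_variation (m : SignedMeasure X) : IsFiniteMeasure m.variation := by
  rw [← m.toSignedMeasure_toJordanDecomposition, JordanDecomposition.toSignedMeasure]
  exact isFiniteMeasure_of_le (m.toJordanDecomposition.posPart + m.toJordanDecomposition.negPart)
    (VectorMeasure.variation_sub_le.trans (by simp))

theorem integrable_of_abs_le (m : SignedMeasure X) {g : X → ℝ} (hg : Measurable g) {C : ℝ}
    (hC : ∀ x, |g x| ≤ C) : m.Integrable g :=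
  Integrable.of_bound hg.aestronglyMeasurable C (.of_forall hC)

theorem integral_posPart_sub_integral_negPart (m : SignedMeasure X) {g : X → ℝ}
    (hg : Measurable g) {C : ℝ} (hC : ∀ x, |g x| ≤ C) :
    ∫ x, g x ∂m.toJordanDecomposition.posPart - ∫ x, g x ∂m.toJordanDecomposition.negPart =
      ∫ᵛ x, g x ∂<•m := by
  conv_rhs => rw [← m.toSignedMeasure_toJordanDecomposition, JordanDecomposition.toSignedMeasure]
  rw [VectorMeasure.integral_sub_vectorMeasure (integrable_of_abs_le _ hg hC)
    (integrable_of_abs_le _ hg hC)]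
  simp

end MeasureTheory.SignedMeasure

theorem MeasureTheory.Measure.withDensityᵥ_indicator_const {X : Type*} [MeasurableSpace X]
    (μ : Measure X) {s : Set X} (hs : MeasurableSet s) [IsFiniteMeasure (μ.restrict s)] (c : ℝ) :
    μ.withDensityᵥ (s.indicator fun _ => c) = c • (μ.restrict s).toSignedMeasure := by
  have hμs : μ s < ⊤ := by simpa using measure_lt_top (μ.restrict s) univ
  ext t ht
  rw [withDensityᵥ_apply ((integrable_indicator_iff hs).2 (integrableOn_const hμs.ne)) ht]
  simp [integral_indicator hs, Measure.toSignedMeasure_apply_measurable ht, ht, Measure.real,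
    inter_comm, mul_comm]

theorem Wnorm_eq_iSup_integral (m : SignedMeasure ℝ) :
    Wnorm m = ⨆ g : {g : ℝ → ℝ // (∀ x, |g x| ≤ 1) ∧ LipschitzWith 1 g}, ∫ᵛ x, g.1 x ∂<•m :=
  iSup_congr fun g => m.integral_posPart_sub_integral_negPart g.2.2.continuous.measurable g.2.1

theorem Wnorm_nonneg (m : SignedMeasure ℝ) : 0 ≤ Wnorm m := by
  rw [Wnorm_eq_iSup_integral]
  have hbdd : BddAbove (range fun g : {g : ℝ → ℝ // (∀ x, |g x| ≤ 1) ∧ LipschitzWith 1 g} =>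
      ∫ᵛ x, g.1 x ∂<•m) := by
    refine ⟨m.variation.real univ, forall_mem_range.2 fun g => ?_⟩
    calc ∫ᵛ x, g.1 x ∂<•m ≤ ‖∫ᵛ x, g.1 x ∂<•m‖ := Real.le_norm_self _
      _ ≤ 1 * ‖(ContinuousLinearMap.lsmul ℝ ℝ : ℝ →L[ℝ] ℝ →L[ℝ] ℝ).flip‖ * m.variation.real univ :=
        VectorMeasure.norm_integral_le_of_norm_le_const
          (.of_forall fun x => (Real.norm_eq_abs _).trans_le (g.2.1 x))
      _ ≤ m.variation.real univ := by simp
  exact le_ciSup_of_le hbdd ⟨0, by simp, LipschitzWith.const' 0⟩ (by simp)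

theorem Wnorm_le {m : SignedMeasure ℝ} {B : ℝ}
    (h : ∀ g : ℝ → ℝ, (∀ x, |g x| ≤ 1) → LipschitzWith 1 g → ∫ᵛ x, g x ∂<•m ≤ B) :
    Wnorm m ≤ B := by
  have : Nonempty {g : ℝ → ℝ // (∀ x, |g x| ≤ 1) ∧ LipschitzWith 1 g} :=
    ⟨⟨0, by simp, LipschitzWith.const' 0⟩⟩
  rw [Wnorm_eq_iSup_integral]
  exact ciSup_le fun g => h g.1 g.2.1 g.2.2

theorem abs_intervalIntegral_sub_mul_le {g : ℝ → ℝ} {K : ℝ≥0} (hg : LipschitzWith K g)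
    {l r x₀ : ℝ} (hlr : l ≤ r) (hx₀ : x₀ ∈ Icc l r) :
    |(∫ x in l..r, g x) - (r - l) * g x₀| ≤ K * (r - l) ^ 2 := by
  have hpt : ∀ x ∈ uIoc l r, ‖g x - g x₀‖ ≤ K * (r - l) := fun x hx => by
    rw [uIoc_of_le hlr] at hx
    calc ‖g x - g x₀‖ ≤ K * dist x x₀ := hg.dist_le_mul x x₀
      _ ≤ K * (r - l) := by
        gcongr
        rw [Real.dist_eq, abs_le]
        constructor <;> linarith [hx.1, hx.2, hx₀.1, hx₀.2]
  rw [← smul_eq_mul, ← intervalIntegral.integral_const, ← intervalIntegral.integral_sub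
    (hg.continuous.intervalIntegrable _ _) intervalIntegrable_const]
  calc _ ≤ K * (r - l) * |r - l| := intervalIntegral.norm_integral_le_of_norm_le_const hpt
    _ = K * (r - l) ^ 2 := by rw [abs_of_nonneg (sub_nonneg.2 hlr)]; ring

theorem abs_intervalIntegral_symm_sub_le {g : ℝ → ℝ} {K : ℝ≥0} (hg : LipschitzWith K g)
    (a : ℝ) {ξ : ℝ} (hξ : 0 ≤ ξ) :
    |(∫ x in -(a + ξ)/2..(a + ξ)/2, g x) - (∫ x in -a/2..a/2, g x) -
        ξ / 2 * (g (-a/2) + g (a/2))| ≤ K * ξ ^ 2 / 2 := by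
  have hgi : ∀ l r, IntervalIntegrable g volume l r := hg.continuous.intervalIntegrable
  have hleft := abs_intervalIntegral_sub_mul_le hg (l := -(a + ξ)/2) (r := -a/2)
    (by linarith) (x₀ := -a/2) ⟨by linarith, le_rfl⟩
  have hright := abs_intervalIntegral_sub_mul_le hg (l := a/2) (r := (a + ξ)/2)
    (by linarith) (x₀ := a/2) ⟨le_rfl, by linarith⟩
  rw [show -a/2 - -(a + ξ)/2 = ξ / 2 by ring] at hleft
  rw [show (a + ξ)/2 - a/2 = ξ / 2 by ring] at hright
  have hsplit : ∫ x in -(a + ξ)/2..(a + ξ)/2, g x = (∫ x in -(a + ξ)/2..-a/2, g x) +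
      (∫ x in -a/2..a/2, g x) + ∫ x in a/2..(a + ξ)/2, g x := by
    rw [intervalIntegral.integral_add_adjacent_intervals (hgi _ _) (hgi _ _),
      intervalIntegral.integral_add_adjacent_intervals (hgi _ _) (hgi _ _)]
  calc _ = |((∫ x in -(a + ξ)/2..-a/2, g x) - ξ / 2 * g (-a/2)) +
        ((∫ x in a/2..(a + ξ)/2, g x) - ξ / 2 * g (a/2))| := by rw [hsplit]; ring_nf
    _ ≤ _ := (abs_add_le _ _).trans (by linarith)

-- `uniformKernel (a + ξ)` is the paper's `ρ_ξ`, and `uniformKernelDeriv a` its `ρ̇`.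
def uniformKernel (s : ℝ) : SignedMeasure ℝ :=
  densSM (Set.indicator (Set.Icc (-s/2) (s/2)) (fun _ => s⁻¹))

def uniformKernelDeriv (a : ℝ) : SignedMeasure ℝ :=
  densSM (Set.indicator (Set.Icc (-a/2) (a/2)) (fun _ => -(a^2)⁻¹)) +
    (a⁻¹/2) • (Measure.dirac (-a/2)).toSignedMeasure +
    (a⁻¹/2) • (Measure.dirac (a/2)).toSignedMeasure

theorem integral_densSM_indicator_Icc {l r : ℝ} (hlr : l ≤ r) (c : ℝ) (g : ℝ → ℝ) :
    ∫ᵛ x, g x ∂<•densSM (Set.indicator (Icc l r) fun _ => c) = c * ∫ x in l..r, g x := by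
  rw [densSM, volume.withDensityᵥ_indicator_const measurableSet_Icc,
    VectorMeasure.integral_smul_vectorMeasure, VectorMeasure.integral_toSignedMeasure,
    integral_Icc_eq_integral_Ioc, ← intervalIntegral.integral_of_le hlr, smul_eq_mul]

theorem integral_uniformKernel {s : ℝ} (hs : 0 ≤ s) (g : ℝ → ℝ) :
    ∫ᵛ x, g x ∂<•uniformKernel s = s⁻¹ * ∫ x in -s/2..s/2, g x :=
  integral_densSM_indicator_Icc (by linarith) _ g

theorem integral_uniformKernelDeriv {a : ℝ} (ha : 0 ≤ a) {g : ℝ → ℝ} (hg : Measurable g)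
    {C : ℝ} (hC : ∀ x, |g x| ≤ C) :
    ∫ᵛ x, g x ∂<•uniformKernelDeriv a =
      -(a^2)⁻¹ * (∫ x in -a/2..a/2, g x) + a⁻¹/2 * (g (-a/2) + g (a/2)) := by
  have hgi := fun m : SignedMeasure ℝ => m.integrable_of_abs_le hg hC
  rw [uniformKernelDeriv, VectorMeasure.integral_add_vectorMeasure (hgi _) (hgi _),
    VectorMeasure.integral_add_vectorMeasure (hgi _) (hgi _),
    integral_densSM_indicator_Icc (by linarith)]
  simp only [VectorMeasure.integral_smul_vectorMeasure, VectorMeasure.integral_toSignedMeasure,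
    integral_dirac, smul_eq_mul]
  ring

theorem integral_uniformKernel_diffQuot {a ξ : ℝ} (ha : 0 ≤ a) (hξ : 0 ≤ ξ) {g : ℝ → ℝ}
    (hg : Measurable g) {C : ℝ} (hC : ∀ x, |g x| ≤ C) :
    ∫ᵛ x, g x ∂<•(ξ⁻¹ • (uniformKernel (a + ξ) - uniformKernel a) - uniformKernelDeriv a) =
      ξ⁻¹ * ((a + ξ)⁻¹ * (∫ x in -(a + ξ)/2..(a + ξ)/2, g x) - a⁻¹ * ∫ x in -a/2..a/2, g x) -
        (-(a^2)⁻¹ * (∫ x in -a/2..a/2, g x) + a⁻¹/2 * (g (-a/2) + g (a/2))) := by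
  have hgi := fun m : SignedMeasure ℝ => m.integrable_of_abs_le hg hC
  rw [VectorMeasure.integral_sub_vectorMeasure (hgi _) (hgi _),
    VectorMeasure.integral_smul_vectorMeasure,
    VectorMeasure.integral_sub_vectorMeasure (hgi _) (hgi _),
    integral_uniformKernel (by linarith), integral_uniformKernel ha,
    integral_uniformKernelDeriv ha hg hC, smul_eq_mul]

theorem abs_diffQuot_sub_le {a ξ F G S : ℝ} (ha : 0 < a) (hξ : 0 < ξ) (hF : |F| ≤ a)
    (hS : |S| ≤ 2) (hGF : |G - F - ξ / 2 * S| ≤ ξ ^ 2 / 2) :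
    |ξ⁻¹ * ((a + ξ)⁻¹ * G - a⁻¹ * F) - (-(a^2)⁻¹ * F + a⁻¹/2 * S)| ≤
      (2 / a^2 + 1 / (2 * a)) * ξ := by
  have key : ξ⁻¹ * ((a + ξ)⁻¹ * G - a⁻¹ * F) - (-(a^2)⁻¹ * F + a⁻¹/2 * S) =
      ξ / (a^2 * (a + ξ)) * F + (G - F - ξ / 2 * S) / (ξ * (a + ξ)) -
        ξ / (2 * a * (a + ξ)) * S := by
    field_simp
    ring
  have hFterm : |ξ / (a^2 * (a + ξ)) * F| ≤ ξ / a^2 := by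
    rw [abs_mul, abs_of_pos (by positivity)]
    calc ξ / (a^2 * (a + ξ)) * |F| ≤ ξ / (a^2 * (a + ξ)) * a := by gcongr
      _ = ξ / (a * (a + ξ)) := by field_simp
      _ ≤ ξ / (a * a) := by gcongr; linarith
      _ = ξ / a^2 := by ring
  have hGterm : |(G - F - ξ / 2 * S) / (ξ * (a + ξ))| ≤ ξ / (2 * a) := by
    rw [abs_div, abs_of_pos (show 0 < ξ * (a + ξ) by positivity)]
    calc |G - F - ξ / 2 * S| / (ξ * (a + ξ)) ≤ ξ ^ 2 / 2 / (ξ * (a + ξ)) := by gcongr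
      _ = ξ / (2 * (a + ξ)) := by field_simp
      _ ≤ ξ / (2 * a) := by gcongr; linarith
  have hSterm : |ξ / (2 * a * (a + ξ)) * S| ≤ ξ / a^2 := by
    rw [abs_mul, abs_of_pos (by positivity)]
    calc ξ / (2 * a * (a + ξ)) * |S| ≤ ξ / (2 * a * (a + ξ)) * 2 := by gcongr
      _ = ξ / (a * (a + ξ)) := by field_simp
      _ ≤ ξ / (a * a) := by gcongr; linarith
      _ = ξ / a^2 := by ring
  have hsum : (2 / a^2 + 1 / (2 * a)) * ξ = ξ / a^2 + ξ / (2 * a) + ξ / a^2 := by ring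
  rw [key, hsum]
  exact (abs_sub _ _).trans
    (add_le_add ((abs_add_le _ _).trans (add_le_add hFterm hGterm)) hSterm)

theorem abs_integral_uniformKernel_diffQuot_le {a ξ : ℝ} (ha : 0 < a) (hξ : 0 < ξ)
    {g : ℝ → ℝ} (hb : ∀ x, |g x| ≤ 1) (hg : LipschitzWith 1 g) :
    |∫ᵛ x, g x ∂<•(ξ⁻¹ • (uniformKernel (a + ξ) - uniformKernel a) - uniformKernelDeriv a)| ≤
      (2 / a^2 + 1 / (2 * a)) * ξ := by
  rw [integral_uniformKernel_diffQuot ha.le hξ.le hg.continuous.measurable hb]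
  refine abs_diffQuot_sub_le ha hξ ?_ ?_
    (by simpa using abs_intervalIntegral_symm_sub_le hg a hξ.le)
  · have := intervalIntegral.norm_integral_le_of_norm_le_const (a := -a/2) (b := a/2)
      fun x _ => (Real.norm_eq_abs (g x)).trans_le (hb x)
    rwa [Real.norm_eq_abs, one_mul, show a/2 - -a/2 = a by ring, abs_of_pos ha] at this
  · exact (abs_add_le _ _).trans (by linarith [hb (-a/2), hb (a/2)])

/-- derivative of the uniform noise kernel with respect to the noise radius:
with `ρ_ξ = (a+ξ)⁻¹ 1_{[−(a+ξ)/2,(a+ξ)/2]}` one has `(ρ_ξ − ρ₀)/ξ → ρ̇` in the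
Wasserstein–Kantorovich norm, where
`ρ̇ = −a⁻² 1_{[−a/2,a/2]} + (a⁻¹/2) δ_{−a/2} + (a⁻¹/2) δ_{a/2}`. -/
theorem uniform_noise_kernel_derivative (a : ℝ) (ha : 0 < a) :
    Filter.Tendsto
      (fun ξ : ℝ => Wnorm (ξ⁻¹ •
          (densSM (Set.indicator (Set.Icc (-(a+ξ)/2) ((a+ξ)/2)) (fun _ => (a+ξ)⁻¹)) -
           densSM (Set.indicator (Set.Icc (-a/2) (a/2)) (fun _ => a⁻¹))) -
        (densSM (Set.indicator (Set.Icc (-a/2) (a/2)) (fun _ => -(a^2)⁻¹)) +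
          (a⁻¹/2) • (MeasureTheory.Measure.dirac (-a/2)).toSignedMeasure +
          (a⁻¹/2) • (MeasureTheory.Measure.dirac (a/2)).toSignedMeasure)))
      (nhdsWithin 0 (Set.Ioi 0)) (nhds 0) := by
  change Tendsto (fun ξ => Wnorm (ξ⁻¹ • (uniformKernel (a + ξ) - uniformKernel a) -
    uniformKernelDeriv a)) _ _
  have hlim : Tendsto (fun ξ : ℝ => (2 / a^2 + 1 / (2 * a)) * ξ) (nhdsWithin 0 (Ioi 0))
      (nhds 0) := by
    simpa using ((continuous_const_mul _).tendsto' 0 0 (mul_zero _)).mono_left nhdsWithin_le_nhds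
  refine squeeze_zero' (.of_forall fun _ => Wnorm_nonneg _) ?_ hlim
  filter_upwards [self_mem_nhdsWithin] with ξ (hξ : 0 < ξ)
  exact Wnorm_le fun g hb hg =>
    (le_abs_self _).trans (abs_integral_uniformKernel_diffQuot_le ha hξ hb hg)
end
end
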